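/- arXiv:2401.04941 — 11 statements merged into one kernel-verified Lean document; each statement's English description precedes it below -/
import Mathlib

section
/- Let q be a prime power and let b, n, k be positive integers with b ≤ n. If C is an F_q-linear code of length n and dimension k whose minimum b-symbol distance is d_b, then (q^b - 1)·n/(q - 1) ≥ Σ_{i=0}^{k-1} ⌈q^{b-1}·d_b / q^i⌉. (Note that q - 1 divides q^b - 1, so the left-hand side is an integer.) -/
/-!
Each length-`b` window of a word in `F^n` is encoded by the `q`-ary simplex code of dimension `b`,
whose coordinates are the points of `ℙ F (F^b)` and whose nonzero codewords all have Hamming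
weight `q^(b-1)`, since a nonzero functional on `F^b` is nonzero at `q^(b-1)` points. This
injective linear map sends a code of minimum `b`-symbol distance `d` to a Hamming-metric code of
the same dimension, length `n (q^b - 1)/(q - 1)` and minimum distance at least `q^(b-1) d`.

The classical Griesmer bound then applies. It is proved by induction on the dimension: restricting
the code to the zero set of a minimum-weight codeword `c` loses at most one dimension and `wt c`
coordinates, and leaves minimum distance at least `⌈wt c / q⌉`.
-/

/-- The `b`-symbol weight of a vector `c ∈ F^n` (coordinates indexed cyclically by `ZMod n`):
the number of indices `i` such that the window `(c_i, …, c_{i+b-1})` is nonzero. -/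
noncomputable def bWt {n : ℕ} {F : Type*} [Zero F] (b : ℕ) (c : ZMod n → F) : ℕ :=
  Nat.card {i : ZMod n | ∃ j < b, c (i + (j : ZMod n)) ≠ 0}

open Finset Module
open scoped LinearAlgebra.Projectivization

lemma hammingNorm_funLeft_subtype_val {ι F : Type*} [Fintype ι] [Zero F] [DecidableEq F]
    (p : ι → Prop) [DecidablePred p] (x : ι → F) :
    hammingNorm (fun i : {i // p i} => x i) = #{i | p i ∧ x i ≠ 0} := by
  rw [hammingNorm, ← Fintype.card_subtype, ← Fintype.card_subtype]
  exact Fintype.card_congr (Equiv.subtypeSubtypeEquivSubtypeInter p (x · ≠ 0))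

lemma card_subtype_eq_zero_add_hammingNorm {ι F : Type*} [Fintype ι] [Zero F] [DecidableEq F]
    (c : ι → F) : Fintype.card {i // c i = 0} + hammingNorm c = Fintype.card ι := by
  rw [Fintype.card_subtype, hammingNorm, ← card_univ]
  exact card_filter_add_card_filter_not _

lemma ceilDiv_pow_succ_le {q d w : ℕ} (hq : 0 < q) (hdw : d ≤ w) (i : ℕ) :
    d ⌈/⌉ q ^ (i + 1) ≤ w ⌈/⌉ q ⌈/⌉ q ^ i := by
  have h1 : w ≤ q * (w ⌈/⌉ q) := (ceilDiv_le_iff_le_mul hq).1 le_rfl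
  have h2 : w ⌈/⌉ q ≤ q ^ i * (w ⌈/⌉ q ⌈/⌉ q ^ i) :=
    (ceilDiv_le_iff_le_mul (by positivity)).1 le_rfl
  rw [ceilDiv_le_iff_le_mul (by positivity), pow_succ', mul_assoc]
  exact hdw.trans (h1.trans (Nat.mul_le_mul_left q h2))

section Griesmer
variable {F ι : Type*} [Field F] [Fintype F] [DecidableEq F] [Fintype ι]

lemma card_filter_sub_mul_ne_zero (u v : F) :
    #{a : F | u - a * v ≠ 0} =
      (Fintype.card F - 1) * (if v ≠ 0 then 1 else 0) +
        Fintype.card F * (if v = 0 ∧ u ≠ 0 then 1 else 0) := by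
  by_cases hv : v = 0
  · by_cases hu : u = 0 <;> simp [hu, hv]
  · have hroot : ({a : F | ¬u - a * v ≠ 0} : Finset F) = {u / v} := by
      ext a
      simp [sub_eq_zero, eq_div_iff hv, eq_comm]
    have := card_filter_add_card_filter_not (s := (univ : Finset F)) (fun a => u - a * v ≠ 0)
    rw [hroot, card_singleton, card_univ] at this
    rw [if_pos hv, if_neg (by simp [hv]), mul_one, mul_zero, add_zero]
    exact Nat.eq_sub_of_add_eq this

lemma sum_hammingNorm_sub_smul (x c : ι → F) :
    ∑ a : F, hammingNorm (x - a • c) =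
      (Fintype.card F - 1) * hammingNorm c + Fintype.card F * #{i | c i = 0 ∧ x i ≠ 0} := by
  simp only [hammingNorm, card_filter, Pi.sub_apply, Pi.smul_apply, smul_eq_mul]
  rw [sum_comm]
  simp only [← card_filter, card_filter_sub_mul_ne_zero, sum_add_distrib, ← mul_sum]

lemma Submodule.exists_hammingNorm_le (C : Submodule F (ι → F)) (hC : C ≠ ⊥) :
    ∃ c ∈ C, c ≠ 0 ∧ ∀ x ∈ C, x ≠ 0 → hammingNorm c ≤ hammingNorm x := by
  obtain ⟨c, ⟨hcC, hc0⟩, hmin⟩ := Set.exists_min_image {x | x ∈ C ∧ x ≠ 0} hammingNorm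
    (Set.toFinite _) (Submodule.exists_mem_ne_zero_of_ne_bot hC)
  exact ⟨c, hcC, hc0, fun x hx hx0 => hmin x ⟨hx, hx0⟩⟩

def Submodule.residual (C : Submodule F (ι → F)) (c : ι → F) :
    Submodule F ({i // c i = 0} → F) :=
  C.map (LinearMap.funLeft F F Subtype.val)

variable {C : Submodule F (ι → F)} {c : ι → F}

/-- Sum the bounds `hammingNorm c ≤ hammingNorm (x - a • c)` over all `a : F`. -/
lemma eq_smul_or_hammingNorm_le_mul (hc : c ∈ C)
    (hmin : ∀ y ∈ C, y ≠ 0 → hammingNorm c ≤ hammingNorm y) {x : ι → F} (hx : x ∈ C) :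
    (∃ a : F, x = a • c) ∨ hammingNorm c ≤ Fintype.card F * #{i | c i = 0 ∧ x i ≠ 0} := by
  refine or_iff_not_imp_left.2 fun hne => ?_
  push Not at hne
  have hle : ∀ a : F, hammingNorm c ≤ hammingNorm (x - a • c) := fun a =>
    hmin _ (C.sub_mem hx (C.smul_mem a hc)) (sub_ne_zero.2 (hne a))
  have hsum := (sum_le_sum fun a (_ : a ∈ univ) => hle a).trans_eq (sum_hammingNorm_sub_smul x c)
  rw [sum_const, card_univ, smul_eq_mul] at hsum
  have : (Fintype.card F - 1) * hammingNorm c + hammingNorm c =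
      Fintype.card F * hammingNorm c := by
    rw [← Nat.succ_mul, Nat.succ_eq_add_one, Nat.sub_add_cancel Fintype.card_pos]
  omega

lemma finrank_le_finrank_residual_add_one (hc : c ∈ C) (hc0 : c ≠ 0)
    (hmin : ∀ y ∈ C, y ≠ 0 → hammingNorm c ≤ hammingNorm y) :
    finrank F C ≤ finrank F (C.residual c) + 1 := by
  set f := LinearMap.funLeft F F (Subtype.val : {i // c i = 0} → ι) ∘ₗ C.subtype
  have hker : LinearMap.ker f ≤ Submodule.span F {⟨c, hc⟩} := by
    rintro ⟨x, hx⟩ hfx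
    have hzero : #{i | c i = 0 ∧ x i ≠ 0} = 0 := by
      rw [← hammingNorm_funLeft_subtype_val, hammingNorm_eq_zero]
      exact hfx
    have hpos : 0 < hammingNorm c := hammingNorm_pos_iff.2 hc0
    obtain ⟨a, rfl⟩ := (eq_smul_or_hammingNorm_le_mul hc hmin hx).resolve_right
      (by rw [hzero, mul_zero]; omega)
    exact Submodule.mem_span_singleton.2 ⟨a, rfl⟩
  have hrange : LinearMap.range f = C.residual c := by
    rw [LinearMap.range_comp, Submodule.range_subtype, Submodule.residual]
  have := hrange ▸ LinearMap.finrank_range_add_finrank_ker f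
  have := (Submodule.finrank_mono hker).trans_eq (finrank_span_singleton (by simpa using hc0))
  omega

lemma le_mul_hammingNorm_of_mem_residual (hc : c ∈ C)
    (hmin : ∀ y ∈ C, y ≠ 0 → hammingNorm c ≤ hammingNorm y)
    {y : {i // c i = 0} → F} (hy : y ∈ C.residual c) (hy0 : y ≠ 0) :
    hammingNorm c ≤ Fintype.card F * hammingNorm y := by
  obtain ⟨x, hx, rfl⟩ := hy
  obtain ⟨⟨i, hi⟩, hxi⟩ := Function.ne_iff.1 hy0
  change hammingNorm c ≤ _ * hammingNorm fun i : {i // c i = 0} => x i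
  rw [hammingNorm_funLeft_subtype_val]
  refine (eq_smul_or_hammingNorm_le_mul hc hmin hx).resolve_left ?_
  rintro ⟨a, rfl⟩
  simp [hi] at hxi

theorem griesmer_bound (C : Submodule F (ι → F)) {d : ℕ}
    (hd : ∀ x ∈ C, x ≠ 0 → d ≤ hammingNorm x) {k : ℕ} (hk : k ≤ finrank F C) :
    ∑ i ∈ range k, d ⌈/⌉ Fintype.card F ^ i ≤ Fintype.card ι := by
  induction k generalizing ι d with
  | zero => simp
  | succ k ih =>
    set q := Fintype.card F
    have hq : 0 < q := Fintype.card_pos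
    obtain ⟨c, hc, hc0, hmin⟩ := C.exists_hammingNorm_le (by rintro rfl; simp at hk)
    have hdc := hd c hc hc0
    have hres := ih (C.residual c) (d := hammingNorm c ⌈/⌉ q)
      (fun y hy hy0 => (ceilDiv_le_iff_le_mul hq).2
        (le_mul_hammingNorm_of_mem_residual hc hmin hy hy0))
      (by have := finrank_le_finrank_residual_add_one hc hc0 hmin; omega)
    calc ∑ i ∈ range (k + 1), d ⌈/⌉ q ^ i = ∑ i ∈ range k, d ⌈/⌉ q ^ (i + 1) + d := by
          rw [sum_range_succ', pow_zero, ceilDiv_one]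
      _ ≤ ∑ i ∈ range k, hammingNorm c ⌈/⌉ q ⌈/⌉ q ^ i + hammingNorm c :=
          add_le_add (sum_le_sum fun i _ => ceilDiv_pow_succ_le hq hdc i) hdc
      _ ≤ Fintype.card {i // c i = 0} + hammingNorm c := Nat.add_le_add_right hres _
      _ = Fintype.card ι := card_subtype_eq_zero_add_hammingNorm c

end Griesmer

namespace Projectivization
variable {F V : Type*} [DivisionRing F] [AddCommGroup V] [Module F V]

noncomputable instance [Finite V] : Fintype (ℙ F V) :=
  Fintype.ofFinite _

lemma natCard_ne_zero_and_eq_mul {Q : V → Prop} (hQ : ∀ (a : Fˣ) (v : V), Q (a • v) ↔ Q v) :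
    Nat.card {v : V // v ≠ 0 ∧ Q v} = Nat.card {p : ℙ F V // Q p.rep} * (Nat.card F - 1) := by
  have hQrep (v : {v : V // v ≠ 0}) : Q v ↔ Q (mk F v.1 v.2).rep := by
    obtain ⟨a, ha⟩ := exists_smul_eq_mk_rep F v.1 v.2
    rw [← ha, hQ]
  let e := ((Equiv.subtypeSubtypeEquivSubtypeInter (· ≠ 0) Q).symm.trans
    ((nonZeroEquivProjectivizationProdUnits F V).subtypeEquiv
      (q := fun x => Q x.1.rep) hQrep)).trans
      (Equiv.prodSubtypeFstEquivSubtypeProd (p := fun p : ℙ F V => Q p.rep))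
  rw [Nat.card_congr e, Nat.card_prod, Nat.card_units]

variable [Finite F] [FiniteDimensional F V]

lemma natCard_rep_apply_ne_zero {f : Dual F V} (hf : f ≠ 0) :
    Nat.card {p : ℙ F V // f p.rep ≠ 0} = Nat.card F ^ (finrank F V - 1) := by
  classical
  have := Module.finite_of_finite F (M := V)
  have : Fintype V := Fintype.ofFinite V
  have hq : 1 < Nat.card F := Finite.one_lt_card
  have hrank := Dual.finrank_ker_add_one_of_ne_zero hf
  have hker : Nat.card {v : V // f v = 0} = Nat.card F ^ (finrank F V - 1) := by
    rw [← hrank, Nat.add_sub_cancel, ← natCard_eq_pow_finrank]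
    rfl
  have hcompl :
      Nat.card {v : V // v ≠ 0 ∧ f v ≠ 0} = Nat.card V - Nat.card {v : V // f v = 0} := by
    rw [Nat.card_congr (Equiv.subtypeEquivRight fun v =>
      and_iff_right_of_imp fun h hv => h (by rw [hv, map_zero]))]
    simp only [Nat.card_eq_fintype_card]
    exact Fintype.card_subtype_compl _
  rw [hker, natCard_eq_pow_finrank (K := F) (V := V),
    natCard_ne_zero_and_eq_mul (F := F) (by simp [Units.smul_def])] at hcompl
  obtain ⟨m, hm⟩ : ∃ m, finrank F V = m + 1 := ⟨_, hrank.symm⟩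
  rw [hm, Nat.add_sub_cancel, pow_succ, ← Nat.mul_sub_one] at hcompl
  rw [hm, Nat.add_sub_cancel]
  exact Nat.eq_of_mul_eq_mul_right (by omega) hcompl

end Projectivization

lemma hammingNorm_uncurry {ι κ F : Type*} [Fintype ι] [Fintype κ] [Zero F] [DecidableEq F]
    (g : ι → κ → F) : hammingNorm (fun x : ι × κ => g x.1 x.2) = ∑ i, hammingNorm (g i) := by
  simp only [hammingNorm, card_filter, Fintype.sum_prod_type]

section Simplex
variable {F : Type*} [Field F] [Fintype F] [DecidableEq F] {b : ℕ}

variable (F b) in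
noncomputable def simplexEncode : (Fin b → F) →ₗ[F] (ℙ F (Fin b → F) → F) :=
  LinearMap.pi fun p => dotProductEquiv F (Fin b) p.rep

lemma hammingNorm_simplexEncode {v : Fin b → F} (hv : v ≠ 0) :
    hammingNorm (simplexEncode F b v) = Fintype.card F ^ (b - 1) := by
  have hf : dotProductEquiv F (Fin b) v ≠ 0 := by simpa using hv
  have := Projectivization.natCard_rep_apply_ne_zero hf
  rw [finrank_fin_fun, Nat.card_eq_fintype_card, Nat.card_eq_fintype_card,
    Fintype.card_subtype] at this
  rw [hammingNorm, ← this]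
  simp [simplexEncode, dotProduct_comm]

variable {E ι : Type*} [AddCommGroup E] [Module F E] [Fintype ι]

noncomputable def concatSimplex (W : ι → E →ₗ[F] (Fin b → F)) :
    E →ₗ[F] (ι × ℙ F (Fin b → F) → F) :=
  LinearMap.pi fun x => LinearMap.proj x.2 ∘ₗ simplexEncode F b ∘ₗ W x.1

lemma hammingNorm_concatSimplex (W : ι → E →ₗ[F] (Fin b → F)) (c : E) :
    hammingNorm (concatSimplex W c) = Fintype.card F ^ (b - 1) * #{i | W i c ≠ 0} := by
  refine (hammingNorm_uncurry fun i => simplexEncode F b (W i c)).trans ?_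
  rw [card_filter, mul_sum]
  refine sum_congr rfl fun i _ => ?_
  by_cases h : W i c = 0
  · simp [h]
  · simp [h, hammingNorm_simplexEncode]

lemma concatSimplex_injective {W : ι → E →ₗ[F] (Fin b → F)}
    (hW : ∀ c, (∀ i, W i c = 0) → c = 0) : Function.Injective (concatSimplex W) := by
  rw [← LinearMap.ker_eq_bot, LinearMap.ker_eq_bot']
  intro c hc
  have := hammingNorm_concatSimplex W c
  rw [hc, hammingNorm_zero, eq_comm, mul_eq_zero, card_eq_zero, filter_eq_empty_iff] at this
  exact hW c fun i => by simpa using this.resolve_left (by positivity) (mem_univ i)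

end Simplex

section Window
variable {F : Type*} [Field F] {n : ℕ}

def window (b : ℕ) (i : ZMod n) : (ZMod n → F) →ₗ[F] (Fin b → F) :=
  LinearMap.funLeft F F fun j : Fin b => i + (j : ℕ)

lemma bWt_eq_card_window_ne_zero [NeZero n] [DecidableEq F] (b : ℕ) (c : ZMod n → F) :
    bWt b c = #{i | window b i c ≠ 0} := by
  rw [bWt, Nat.card_coe_set_eq, Set.ncard_eq_toFinset_card', Set.toFinset_ofPred]
  congr! 2 with i
  simp [window, funext_iff, Fin.exists_iff]

lemma eq_zero_of_window_eq_zero {b : ℕ} (hb : 0 < b) {c : ZMod n → F}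
    (h : ∀ i, window b i c = 0) : c = 0 :=
  funext fun i => by simpa [window] using congrFun (h i) ⟨0, hb⟩

end Window

lemma Int.ceil_natCast_div_le_ceilDiv {K : Type*} [Field K] [LinearOrder K]
    [IsStrictOrderedRing K] [FloorRing K] (a b : ℕ) : ⌈(a : K) / b⌉ ≤ (a ⌈/⌉ b : ℕ) := by
  rcases b.eq_zero_or_pos with rfl | hb
  · simp
  rw [Int.ceil_le, div_le_iff₀ (by positivity)]
  exact_mod_cast (ceilDiv_le_iff_le_mul hb).1 le_rfl |>.trans_eq (mul_comm _ _)

theorem griesmer_bound_bWt {n b d : ℕ} [NeZero n] (hb : 0 < b) {F : Type*} [Field F]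
    [Fintype F] [DecidableEq F] (C : Submodule F (ZMod n → F)) (hd : ∀ c ∈ C, c ≠ 0 → d ≤ bWt b c) :
    ∑ i ∈ range (finrank F C), (Fintype.card F ^ (b - 1) * d) ⌈/⌉ Fintype.card F ^ i ≤
      n * Fintype.card (ℙ F (Fin b → F)) := by
  set Φ := concatSimplex (window (F := F) (n := n) b)
  have hΦ : Function.Injective Φ := concatSimplex_injective fun _ => eq_zero_of_window_eq_zero hb
  have hdist : ∀ y ∈ C.map Φ, y ≠ 0 → Fintype.card F ^ (b - 1) * d ≤ hammingNorm y := by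
    rintro _ ⟨c, hc, rfl⟩ hy0
    rw [hammingNorm_concatSimplex, ← bWt_eq_card_window_ne_zero]
    exact Nat.mul_le_mul_left _ (hd c hc fun h => hy0 (by rw [h, map_zero]))
  have hrank := (LinearEquiv.finrank_eq (C.equivMapOfInjective Φ hΦ)).le
  simpa [Fintype.card_prod, ZMod.card] using griesmer_bound (C.map Φ) hdist hrank

theorem stmt0_general (q b n k d : ℕ) (hb : 0 < b) (hbn : b ≤ n)
    (F : Type*) [Field F] [Fintype F] (hF : Fintype.card F = q)
    (C : Submodule F (ZMod n → F)) (hdim : Module.finrank F C = k)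
    (hlb : ∀ c ∈ C, c ≠ 0 → d ≤ bWt b c) :
    (∑ i ∈ Finset.range k, (⌈((q ^ (b - 1) * d : ℕ) : ℚ) / (q : ℚ) ^ i⌉ : ℚ))
      ≤ ((q ^ b - 1 : ℕ) : ℚ) * n / ((q : ℚ) - 1) := by
  classical
  subst hF hdim
  have : NeZero n := ⟨by omega⟩
  have hq : 1 < Fintype.card F := Fintype.one_lt_card
  have hP := Projectivization.card F (Fin b → F)
  rw [Nat.card_fun, Nat.card_fin, Nat.card_eq_fintype_card, Nat.card_eq_fintype_card] at hP
  calc _ ≤ ∑ i ∈ range (finrank F C),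
          (((Fintype.card F ^ (b - 1) * d) ⌈/⌉ Fintype.card F ^ i : ℕ) : ℚ) :=
        sum_le_sum fun i _ => by
          exact_mod_cast Int.ceil_natCast_div_le_ceilDiv (K := ℚ) _ (Fintype.card F ^ i)
    _ ≤ n * Fintype.card (ℙ F (Fin b → F)) := by exact_mod_cast griesmer_bound_bWt hb C hlb
    _ = _ := by
      have : (Fintype.card F : ℚ) - 1 ≠ 0 := sub_ne_zero.2 (by exact_mod_cast hq.ne')
      rw [hP]
      push_cast [Nat.cast_sub hq.le]
      field_simp

/-- The Griesmer bound in the `b`-symbol metric: if `C` is an `(n, k, d_b)^b_q` linear code,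
then `(q^b - 1)·n/(q - 1) ≥ Σ_{i=0}^{k-1} ⌈q^{b-1}·d_b / q^i⌉`. -/
theorem stmt0 (q b n k d : ℕ) (hb : 0 < b) (hbn : b ≤ n) (hk : 0 < k)
    (F : Type*) [Field F] [Fintype F] (hF : Fintype.card F = q)
    (C : Submodule F (ZMod n → F)) (hdim : Module.finrank F C = k)
    (hlb : ∀ c ∈ C, c ≠ 0 → d ≤ bWt b c)
    (hex : ∃ c ∈ C, c ≠ 0 ∧ bWt b c = d) :
    (∑ i ∈ Finset.range k, (⌈((q ^ (b - 1) * d : ℕ) : ℚ) / (q : ℚ) ^ i⌉ : ℚ))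
      ≤ ((q ^ b - 1 : ℕ) : ℚ) * n / ((q : ℚ) - 1) :=
  stmt0_general q b n k d hb hbn F hF C hdim hlb
end

section
/- Let q be a prime power and let b, n, k be positive integers with b ≤ n. If there exists an F_q-linear code of length n and dimension k whose minimum b-symbol distance is d_b, then there exists an F_q-linear code of length (q^b - 1)·n/(q - 1) and dimension k whose minimum Hamming distance equals q^{b-1}·d_b. -/
noncomputable def hWt {ι : Type*} {F : Type*} [Zero F] (u : ι → F) : ℕ :=
  Nat.card {i : ι | u i ≠ 0}

open scoped LinearAlgebra.Projectivization

namespace LinearMap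

variable {k V : Type*} [DivisionRing k] [AddCommGroup V] [Module k V]

theorem card_eq_card_ker_mul_card {f : V →ₗ[k] k} (hf : f ≠ 0) :
    Nat.card V = Nat.card (ker f) * Nat.card k := by
  rw [(ker f).card_eq_card_quotient_mul_card,
    Nat.card_congr (f.quotKerEquivOfSurjective (surjective_of_ne_zero hf)).toEquiv]

theorem card_setOf_apply_ne_zero [Finite V] {f : V →ₗ[k] k} (hf : f ≠ 0) :
    Nat.card {v | f v ≠ 0} = Nat.card (ker f) * (Nat.card k - 1) := by
  have hcompl : {v | f v ≠ 0} = (ker f : Set V)ᶜ := by ext; simp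
  rw [Nat.card_coe_set_eq, hcompl, Set.ncard_compl, ← Nat.card_coe_set_eq,
    card_eq_card_ker_mul_card hf, Nat.mul_sub_one]
  rfl

end LinearMap

namespace Projectivization

variable {k V : Type*} [DivisionRing k] [AddCommGroup V] [Module k V]

theorem card_setOf_mul_card_units (R : V → Prop) (hR : ∀ (a : kˣ) v, R (a • v) ↔ R v)
    (hR0 : ¬R 0) :
    Nat.card {v | R v} = Nat.card {p : ℙ k V | R p.rep} * Nat.card kˣ := by
  rw [← Nat.card_prod]
  symm
  refine Nat.card_eq_of_bijective
    (fun x => ⟨x.2 • x.1.1.rep, (hR x.2 _).2 x.1.2⟩) ⟨?_, ?_⟩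
  · rintro ⟨⟨p, hp⟩, a⟩ ⟨⟨p', hp'⟩, a'⟩ h
    have h : a • p.rep = a' • p'.rep := congrArg Subtype.val h
    obtain rfl : p = p' := by
      rw [← mk_rep p, ← mk_rep p', mk_eq_mk_iff]
      exact ⟨a⁻¹ * a', by rw [mul_smul, ← h, inv_smul_smul]⟩
    obtain rfl : a = a' := Units.ext <| smul_left_injective k p.rep_nonzero h
    rfl
  · rintro ⟨v, hv⟩
    have hv0 : v ≠ 0 := by rintro rfl; exact hR0 hv
    obtain ⟨a, ha⟩ := exists_smul_eq_mk_rep k v hv0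
    refine ⟨⟨⟨mk k v hv0, show R (mk k v hv0).rep from ?_⟩, a⁻¹⟩, ?_⟩
    · rw [← ha, hR]; exact hv
    · ext; simp [← ha]

theorem card_setOf_apply_rep_ne_zero [Finite k] [Finite V] {f : V →ₗ[k] k} (hf : f ≠ 0) :
    Nat.card {p : ℙ k V | f p.rep ≠ 0} = Nat.card (LinearMap.ker f) := by
  have hR (a : kˣ) (v : V) : f (a • v) ≠ 0 ↔ f v ≠ 0 := by
    rw [Units.smul_def, map_smul, smul_ne_zero_iff_right a.ne_zero]
  have h := card_setOf_mul_card_units (fun v => f v ≠ 0) hR (by simp)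
  rw [LinearMap.card_setOf_apply_ne_zero hf, Nat.card_units] at h
  exact (Nat.eq_of_mul_eq_mul_right (Nat.sub_pos_of_lt Finite.one_lt_card) h).symm

end Projectivization

theorem card_setOf_dotProduct_rep_ne_zero {F : Type*} [Field F] [Finite F] {b : ℕ}
    {x : Fin b → F} (hx : x ≠ 0) :
    Nat.card {p : ℙ F (Fin b → F) | x ⬝ᵥ p.rep ≠ 0} = Nat.card F ^ (b - 1) := by
  have hf : dotProductEquiv F (Fin b) x ≠ 0 := by simpa using hx
  obtain ⟨b, rfl⟩ : ∃ b', b = b' + 1 :=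
    Nat.exists_eq_add_one.2 (Nat.pos_of_ne_zero fun hb => hx (by subst hb; subsingleton))
  have hcard := LinearMap.card_eq_card_ker_mul_card hf
  rw [Nat.card_fun, Nat.card_fin, pow_succ] at hcard
  have := Projectivization.card_setOf_apply_rep_ne_zero hf
  simp only [dotProductEquiv_apply_apply] at this
  rw [this]
  exact (Nat.eq_of_mul_eq_mul_right Finite.card_pos hcard).symm

theorem Nat.card_setOf_prod_eq_sum {α β : Type*} [Fintype α] [Finite β]
    (Q : α → β → Prop) :
    Nat.card {t : α × β | Q t.1 t.2} = ∑ a, Nat.card {y | Q a y} :=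
  (Nat.card_congr (Equiv.subtypeProdEquivSigmaSubtype Q)).trans Nat.card_sigma

theorem hWt_comp_equiv {ι κ F : Type*} [Zero F] (u : κ → F) (e : ι ≃ κ) :
    hWt (u ∘ e) = hWt u :=
  Nat.card_congr (e.subtypeEquiv fun _ => Iff.rfl)

section Window

variable {F : Type*} {n : ℕ}

def bWindow [Zero F] (b : ℕ) (c : ZMod n → F) (i : ZMod n) : Fin b → F :=
  fun j => c (i + ((j : ℕ) : ZMod n))

theorem bWt_eq_card_bWindow_ne_zero [Zero F] (b : ℕ) (c : ZMod n → F) :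
    bWt b c = Nat.card {i | bWindow b c i ≠ 0} := by
  rw [bWt]
  congr
  ext i
  simp [bWindow, funext_iff, Fin.exists_iff]

theorem bWt_pos [Zero F] [NeZero n] {b : ℕ} (hb : 0 < b) {c : ZMod n → F} (hc : c ≠ 0) :
    0 < bWt b c := by
  obtain ⟨i, hi⟩ := Function.ne_iff.1 hc
  have : Nonempty {i : ZMod n | ∃ j < b, c (i + (j : ZMod n)) ≠ 0} :=
    ⟨⟨i, 0, hb, by simpa using hi⟩⟩
  exact Nat.card_pos

variable [Field F]

noncomputable def simplexMap (b : ℕ) :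
    (ZMod n → F) →ₗ[F] (ZMod n × ℙ F (Fin b → F) → F) where
  toFun c t := bWindow b c t.1 ⬝ᵥ t.2.rep
  map_add' _ _ := funext fun _ => add_dotProduct _ _ _
  map_smul' a _ := funext fun _ => smul_dotProduct a _ _

theorem hWt_simplexMap [Finite F] [NeZero n] (b : ℕ) (c : ZMod n → F) :
    hWt (simplexMap b c) = Nat.card F ^ (b - 1) * bWt b c := by
  classical
  have hcount (i : ZMod n) : Nat.card {p : ℙ F (Fin b → F) | bWindow b c i ⬝ᵥ p.rep ≠ 0} =
      Nat.card F ^ (b - 1) * if bWindow b c i ≠ 0 then 1 else 0 := by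
    by_cases hx : bWindow b c i = 0
    · simp [hx]
    · rw [card_setOf_dotProduct_rep_ne_zero hx, if_pos hx, mul_one]
  calc hWt (simplexMap b c)
      = ∑ i, Nat.card {p : ℙ F (Fin b → F) | bWindow b c i ⬝ᵥ p.rep ≠ 0} :=
        Nat.card_setOf_prod_eq_sum
          fun i (p : ℙ F (Fin b → F)) => bWindow b c i ⬝ᵥ p.rep ≠ 0
    _ = Nat.card F ^ (b - 1) * bWt b c := by
      rw [Finset.sum_congr rfl fun i _ => hcount i, ← Finset.mul_sum, ← Finset.card_filter,
        bWt_eq_card_bWindow_ne_zero, Nat.card_eq_card_toFinset, Set.toFinset_ofPred]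

theorem simplexMap_injective [Finite F] [NeZero n] {b : ℕ} (hb : 0 < b) :
    Function.Injective (simplexMap (F := F) (n := n) b) := by
  refine (injective_iff_map_eq_zero _).2 fun c hc => by_contra fun hc0 => ?_
  have hzero : Nat.card F ^ (b - 1) * bWt b c = 0 := by
    rw [← hWt_simplexMap, hc]
    simp [hWt]
  exact (Nat.mul_pos (pow_pos Finite.card_pos _) (bWt_pos hb hc0)).ne' hzero

end Window

theorem isLeast_weight_map {R M M' : Type*} [Semiring R] [AddCommMonoid M] [Module R M]
    [AddCommMonoid M'] [Module R M'] {C : Submodule R M} {Φ : M →ₗ[R] M'}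
    (hΦ : Function.Injective Φ) {wt : M → ℕ} {wt' : M' → ℕ} {m d : ℕ}
    (hwt : ∀ c, wt' (Φ c) = m * wt c) (hd : IsLeast {w | ∃ c ∈ C, c ≠ 0 ∧ wt c = w} d) :
    IsLeast {w | ∃ u ∈ C.map Φ, u ≠ 0 ∧ wt' u = w} (m * d) := by
  obtain ⟨⟨c, hcC, hc0, rfl⟩, hmin⟩ := hd
  refine ⟨⟨Φ c, C.mem_map_of_mem hcC, (map_ne_zero_iff Φ hΦ).2 hc0, hwt c⟩, ?_⟩
  rintro _ ⟨_, ⟨c', hc'C, rfl⟩, hc'0, rfl⟩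
  rw [hwt]
  exact Nat.mul_le_mul_left m (hmin ⟨c', hc'C, fun h => hc'0 (by rw [h, map_zero]), rfl⟩)

theorem stmt1_general (q b n k d : ℕ) (hb : 0 < b) (hbn : b ≤ n)
    (F : Type*) [Field F] [Fintype F] (hF : Fintype.card F = q)
    (C : Submodule F (ZMod n → F)) (hdim : Module.finrank F C = k)
    (hd : IsLeast {w | ∃ c ∈ C, c ≠ 0 ∧ bWt b c = w} d) :
    ∃ D : Submodule F (ZMod ((q ^ b - 1) * n / (q - 1)) → F),
      Module.finrank F D = k ∧
      IsLeast {w | ∃ u ∈ D, u ≠ 0 ∧ hWt u = w} (q ^ (b - 1) * d) := by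
  have : NeZero n := ⟨by omega⟩
  set P := ℙ F (Fin b → F)
  have hq : 1 < q := hF ▸ Fintype.one_lt_card
  have hP : Nat.card P * (q - 1) = q ^ b - 1 := by
    rw [← hF, ← Nat.card_eq_fintype_card, ← Projectivization.card, Nat.card_fun, Nat.card_fin]
  have hlen : (q ^ b - 1) * n / (q - 1) = n * Nat.card P := by
    rw [← hP, mul_comm, ← mul_assoc, Nat.mul_div_cancel _ (by omega)]
  have : Nonempty (Fin b) := ⟨⟨0, hb⟩⟩
  have : NeZero ((q ^ b - 1) * n / (q - 1)) :=
    ⟨hlen ▸ Nat.mul_ne_zero (NeZero.ne n) (Nat.card_pos (α := P)).ne'⟩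
  obtain ⟨e⟩ : Nonempty (ZMod ((q ^ b - 1) * n / (q - 1)) ≃ ZMod n × P) :=
    Finite.card_eq.1 (by rw [Nat.card_prod, Nat.card_zmod, Nat.card_zmod, hlen])
  let Φ := (LinearEquiv.funCongrLeft F F e).toLinearMap ∘ₗ simplexMap b
  have hΦ : Function.Injective Φ := by
    rw [LinearMap.coe_comp]
    exact (LinearEquiv.injective _).comp (simplexMap_injective hb)
  have hwt (c : ZMod n → F) : hWt (Φ c) = q ^ (b - 1) * bWt b c := by
    rw [show Φ c = simplexMap b c ∘ e from rfl, hWt_comp_equiv, hWt_simplexMap,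
      Nat.card_eq_fintype_card, hF]
  refine ⟨C.map Φ, ?_, ?_⟩
  · rw [← hdim]; exact (Submodule.equivMapOfInjective Φ hΦ C).finrank_eq.symm
  · exact isLeast_weight_map hΦ hwt hd

/-- If there exists an `(n, k, d_b)^b_q` linear code, then there exists an
`[(q^b-1)·n/(q-1), k, q^{b-1}·d_b]_q` linear code. -/
theorem stmt1 (q b n k d : ℕ) (hb : 0 < b) (hbn : b ≤ n) (hk : 0 < k)
    (F : Type*) [Field F] [Fintype F] (hF : Fintype.card F = q)
    (C : Submodule F (ZMod n → F)) (hdim : Module.finrank F C = k)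
    (hd : IsLeast {w | ∃ c ∈ C, c ≠ 0 ∧ bWt b c = w} d) :
    ∃ D : Submodule F (ZMod ((q ^ b - 1) * n / (q - 1)) → F),
      Module.finrank F D = k ∧
      IsLeast {w | ∃ u ∈ D, u ≠ 0 ∧ hWt u = w} (q ^ (b - 1) * d) :=
  stmt1_general q b n k d hb hbn F hF C hdim hd
end

section
/- Let q be a prime power, let b, n, N, w be positive integers with b ≤ n, and let φ : F_q^b → F_q^N be an F_q-linear map such that wt_H(φ(a)) = w for every nonzero a ∈ F_q^b. For c = (c_0, …, c_{n-1}) ∈ F_q^n, write c̄_i = (c_i, c_{i+1}, …, c_{i+b-1}) ∈ F_q^b with subscripts modulo n, for each i ∈ {0, …, n-1}. Then the concatenated vector (φ(c̄_0), φ(c̄_1), …, φ(c̄_{n-1})) ∈ F_q^{Nn} has Hamming weight exactly w · wt_b(c). -/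
theorem Nat.card_sigma_of_card_eq {α : Type*} {β : α → Type*} [∀ a, Finite (β a)] {m : ℕ}
    (h : ∀ a, Nat.card (β a) = m) : Nat.card (Σ a, β a) = Nat.card α * m := by
  let e : ∀ a, β a ≃ Fin m := fun a => (Finite.equivFin (β a)).trans (finCongr (h a))
  rw [Nat.card_congr ((Equiv.sigmaCongrRight e).trans (Equiv.sigmaEquivProd α (Fin m))),
    Nat.card_prod, Nat.card_fin]

theorem hWt_concat_of_hWt_eq {ι κ V F : Type*} [Finite κ] [Zero V] [Zero F] (φ : V → κ → F)
    (hφ₀ : φ 0 = 0) {w : ℕ} (hφ : ∀ a, a ≠ 0 → hWt (φ a) = w) (x : ι → V) :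
    hWt (fun p : ι × κ => φ (x p.1) p.2) = w * Nat.card {i | x i ≠ 0} := by
  let e : {p : ι × κ | φ (x p.1) p.2 ≠ 0} ≃ Σ i : {i | x i ≠ 0}, {k | φ (x i) k ≠ 0} :=
    { toFun := fun p => ⟨⟨p.1.1, fun h => p.2 (by simp [h, hφ₀])⟩, ⟨p.1.2, p.2⟩⟩
      invFun := fun s => ⟨(s.1.1, s.2.1), s.2.2⟩
      left_inv := fun _ => rfl
      right_inv := fun _ => rfl }
  rw [hWt, Nat.card_congr e, Nat.card_sigma_of_card_eq fun i => hφ _ i.2, mul_comm]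

theorem stmt2_general (b n N w : ℕ)
    (F : Type*) [Field F]
    (φ : (Fin b → F) →ₗ[F] (Fin N → F))
    (hφ : ∀ a : Fin b → F, a ≠ 0 → hWt (φ a) = w)
    (c : ZMod n → F) :
    hWt (fun p : ZMod n × Fin N =>
        φ (fun j : Fin b => c (p.1 + ((j : ℕ) : ZMod n))) p.2)
      = w * bWt b c := by
  have hwindow : {i : ZMod n | (fun j : Fin b => c (i + ((j : ℕ) : ZMod n))) ≠ 0}
      = {i | ∃ j < b, c (i + (j : ZMod n)) ≠ 0} := by
    ext i
    simp [funext_iff, Fin.exists_iff]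
  rw [hWt_concat_of_hWt_eq φ (map_zero φ) hφ fun i j => c (i + ((j : ℕ) : ZMod n)), hwindow,
    bWt]

/-- If `φ : F_q^b → F_q^N` is linear with `wt_H(φ(a)) = w` for all nonzero `a`, then the
concatenated vector `(φ(c̄_0), …, φ(c̄_{n-1}))` has Hamming weight exactly `w · wt_b(c)`. -/
theorem stmt2 (q b n N w : ℕ) (hb : 0 < b) (hbn : b ≤ n) (hN : 0 < N) (hw : 0 < w)
    (F : Type*) [Field F] [Fintype F] (hF : Fintype.card F = q)
    (φ : (Fin b → F) →ₗ[F] (Fin N → F))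
    (hφ : ∀ a : Fin b → F, a ≠ 0 → hWt (φ a) = w)
    (c : ZMod n → F) :
    hWt (fun p : ZMod n × Fin N =>
        φ (fun j : Fin b => c (p.1 + ((j : ℕ) : ZMod n))) p.2)
      = w * bWt b c :=
  stmt2_general b n N w F φ hφ c
end

section
/- Let q be a prime power and let b, n be positive integers with b ≤ n. For every c ∈ F_q^n, (q - 1)·q^{b-1}·wt_b(c) = Σ_{(a_0, …, a_{b-1}) ∈ F_q^b} wt_H(a_0·c^0 + a_1·c^1 + ⋯ + a_{b-1}·c^{b-1}), where c^j denotes the j-th cyclic shift of c. -/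
/-!
For each position `i`, the coordinate `i` of `∑ⱼ aⱼ c^j` is the dot product of `a` with the
window `(c_i, …, c_{i+b-1})`. A nonzero vector `d ∈ F^b` defines a nonzero linear functional,
whose kernel is a hyperplane, so `a ⬝ᵥ d ≠ 0` for exactly `q^b - q^{b-1} = (q-1) q^{b-1}` vectors
`a`, and for `d = 0` by none. Counting the pairs `(a, i)` with `(∑ⱼ aⱼ c^j)_i ≠ 0` in both orders
gives the identity.
-/

open Finset

section FiniteField

variable {F : Type*} [Field F] [Fintype F] [DecidableEq F]

theorem Module.Dual.card_filter_ne_zero {V : Type*} [AddCommGroup V] [Module F V] [Fintype V]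
    {f : Module.Dual F V} (hf : f ≠ 0) :
    #{v | f v ≠ 0} = (Fintype.card F - 1) * Fintype.card F ^ (Module.finrank F V - 1) := by
  have hrank := f.finrank_ker_add_one_of_ne_zero hf
  have := Fintype.ofFinite (LinearMap.ker f)
  have hker : #{v | f v = 0} = Fintype.card F ^ Module.finrank F (LinearMap.ker f) := by
    rw [← Fintype.card_subtype, ← Module.card_eq_pow_finrank]
    exact Fintype.card_congr (Equiv.subtypeEquivRight fun v => LinearMap.mem_ker.symm)
  have hcompl := card_filter_add_card_filter_not (s := univ) (fun v => f v = 0)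
  rw [card_univ, Module.card_eq_pow_finrank (K := F), ← hrank, hker, pow_succ'] at hcompl
  rw [← hrank, Nat.add_sub_cancel, Nat.sub_one_mul]
  simp only [ne_eq]
  omega

theorem card_filter_dotProduct_ne_zero {ι : Type*} [Fintype ι] [DecidableEq ι] (d : ι → F) :
    #{a : ι → F | a ⬝ᵥ d ≠ 0}
      = if d = 0 then 0 else (Fintype.card F - 1) * Fintype.card F ^ (Fintype.card ι - 1) := by
  split_ifs with hd
  · simp [hd]
  · have hf : dotProductEquiv F ι d ≠ 0 := by
      rwa [← map_zero (dotProductEquiv F ι), (dotProductEquiv F ι).injective.ne_iff]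
    simpa [dotProduct_comm d, Module.finrank_fintype_fun_eq_card] using
      Module.Dual.card_filter_ne_zero hf

end FiniteField

section CyclicWindow

variable {n : ℕ} {F : Type*} [Zero F]

def cyclicWindow (b : ℕ) (c : ZMod n → F) (i : ZMod n) : Fin b → F :=
  fun j => c (i + ((j : ℕ) : ZMod n))

theorem cyclicWindow_ne_zero_iff {b : ℕ} {c : ZMod n → F} {i : ZMod n} :
    cyclicWindow b c i ≠ 0 ↔ ∃ j < b, c (i + (j : ZMod n)) ≠ 0 := by
  simp [funext_iff, cyclicWindow, Fin.exists_iff]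

theorem bWt_eq_card_filter_cyclicWindow_ne_zero [NeZero n] [DecidableEq F] (b : ℕ)
    (c : ZMod n → F) : bWt b c = #{i | cyclicWindow b c i ≠ 0} := by
  simp_rw [bWt, cyclicWindow_ne_zero_iff, Nat.card_eq_card_toFinset, Set.toFinset_ofPred]

end CyclicWindow

theorem hWt_eq_hammingNorm {ι F : Type*} [Fintype ι] [Zero F] [DecidableEq F] (u : ι → F) :
    hWt u = hammingNorm u := by
  rw [hWt, hammingNorm, Nat.card_eq_card_toFinset, Set.toFinset_ofPred]

/-- `(q-1)·q^{b-1}·wt_b(c) = Σ_{(a_0,…,a_{b-1}) ∈ F_q^b} wt_H(a_0 c^0 + ⋯ + a_{b-1} c^{b-1})`,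
where `c^j` is the `j`-th cyclic shift of `c`, i.e. `c^j(i) = c(i+j)`. -/
theorem stmt5 (q b n : ℕ) (hb : 0 < b) (hbn : b ≤ n)
    (F : Type*) [Field F] [Fintype F] (hF : Fintype.card F = q)
    (c : ZMod n → F) :
    (q - 1) * q ^ (b - 1) * bWt b c
      = ∑ a : Fin b → F,
          hWt (fun i : ZMod n => ∑ j : Fin b, a j * c (i + ((j : ℕ) : ZMod n))) := by
  classical
  have : NeZero n := ⟨by omega⟩
  calc (q - 1) * q ^ (b - 1) * bWt b c
      = ∑ i, #{a : Fin b → F | a ⬝ᵥ cyclicWindow b c i ≠ 0} := by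
        simp_rw [card_filter_dotProduct_ne_zero, hF, Fintype.card_fin,
          bWt_eq_card_filter_cyclicWindow_ne_zero, sum_ite, sum_const_zero, sum_const, smul_eq_mul,
          zero_add, filter_not, mul_comm]
    _ = ∑ a : Fin b → F, #{i | a ⬝ᵥ cyclicWindow b c i ≠ 0} :=
        (sum_card_bipartiteAbove_eq_sum_card_bipartiteBelow _).symm
    _ = _ := by simp_rw [hWt_eq_hammingNorm]; rfl
end

section
/- Let q be a prime power and let b, n be positive integers with n ≥ b. Let u = (u_0, …, u_{n-1}) and v = (v_0, …, v_{n-1}) be vectors in F_q^n such that u_i = v_i for every i ∈ {0, 1, …, b-2}. Then the concatenation (u, v) ∈ F_q^{2n} satisfies wt_b((u, v)) = wt_b(u) + wt_b(v). -/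
/-- The concatenation `(u, v) ∈ F^{2n}` of two vectors `u, v ∈ F^n`. -/
def concat2 {n : ℕ} {F : Type*} (u v : ZMod n → F) : ZMod (2 * n) → F :=
  fun i => if i.val < n then u ((i.val : ℕ) : ZMod n) else v (((i.val - n : ℕ)) : ZMod n)

section Concat

variable {n : ℕ} {F : Type*} (u v : ZMod n → F)

lemma concat2_natCast_of_lt {k : ℕ} (hk : k < n) : concat2 u v k = u k := by
  have hval : (k : ZMod (2 * n)).val = k := ZMod.val_natCast_of_lt (by omega)
  simp [concat2, hval, hk]

lemma concat2_natCast_add_of_lt {k : ℕ} (hk : k < n) :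
    concat2 u v ((n + k : ℕ) : ZMod (2 * n)) = v k := by
  have hval : ((n + k : ℕ) : ZMod (2 * n)).val = n + k := ZMod.val_natCast_of_lt (by omega)
  simp only [concat2, hval]
  simp

variable {b : ℕ}

lemma concat2_natCast_of_lt_add (hbn : b ≤ n) (huv : ∀ i : ℕ, i + 1 < b → u i = v i)
    {k : ℕ} (hk : k + 1 < n + b) : concat2 u v k = u k := by
  rcases lt_or_ge k n with hkn | hkn
  · exact concat2_natCast_of_lt u v hkn
  · obtain ⟨m, rfl⟩ := Nat.exists_eq_add_of_le hkn
    rw [concat2_natCast_add_of_lt u v (by omega), ← huv m (by omega)]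
    simp

lemma concat2_natCast_add_of_lt_add (hbn : b ≤ n) (huv : ∀ i : ℕ, i + 1 < b → u i = v i)
    {k : ℕ} (hk : k + 1 < n + b) : concat2 u v ((n + k : ℕ) : ZMod (2 * n)) = v k := by
  rcases lt_or_ge k n with hkn | hkn
  · exact concat2_natCast_add_of_lt u v hkn
  · obtain ⟨m, rfl⟩ := Nat.exists_eq_add_of_le hkn
    have hwrap : ((n + (n + m) : ℕ) : ZMod (2 * n)) = m := by
      rw [← add_assoc, ← two_mul, Nat.cast_add, ZMod.natCast_self, zero_add]
    rw [hwrap, concat2_natCast_of_lt u v (by omega), huv m (by omega)]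
    simp

end Concat

def concatIndex (n : ℕ) : ZMod n ⊕ ZMod n → ZMod (2 * n) :=
  Sum.elim (fun a => (a.val : ZMod (2 * n))) (fun a => ((n + a.val : ℕ) : ZMod (2 * n)))

lemma concatIndex_bijective (n : ℕ) [NeZero n] : Function.Bijective (concatIndex n) := by
  have hval : ∀ x, (concatIndex n x).val = Sum.elim ZMod.val (fun a => n + a.val) x := by
    rintro (a | a) <;> apply ZMod.val_natCast_of_lt <;> have := a.val_lt <;> omega
  refine (Fintype.bijective_iff_injective_and_card _).2 ⟨fun x y hxy => ?_, by simp [two_mul]⟩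
  have hxy' := congrArg ZMod.val hxy
  rw [hval, hval] at hxy'
  rcases x with a | a <;> rcases y with c | c <;> simp only [Sum.elim_inl, Sum.elim_inr] at hxy'
  · exact congrArg _ (ZMod.val_injective n hxy')
  · have := a.val_lt; omega
  · have := c.val_lt; omega
  · exact congrArg _ (ZMod.val_injective n (by omega))

section Window

variable {n b : ℕ} [NeZero n] {F : Type*} {u v : ZMod n → F}

lemma concat2_concatIndex_inl_add (hbn : b ≤ n) (huv : ∀ i : ℕ, i + 1 < b → u i = v i)
    (a : ZMod n) {j : ℕ} (hj : j < b) :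
    concat2 u v (concatIndex n (.inl a) + j) = u (a + j) := by
  have hidx : concatIndex n (.inl a) + j = ((a.val + j : ℕ) : ZMod (2 * n)) := by
    simp [concatIndex]
  rw [hidx, concat2_natCast_of_lt_add u v hbn huv (by have := a.val_lt; omega)]
  simp

lemma concat2_concatIndex_inr_add (hbn : b ≤ n) (huv : ∀ i : ℕ, i + 1 < b → u i = v i)
    (a : ZMod n) {j : ℕ} (hj : j < b) :
    concat2 u v (concatIndex n (.inr a) + j) = v (a + j) := by
  have hidx : concatIndex n (.inr a) + j = ((n + (a.val + j) : ℕ) : ZMod (2 * n)) := by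
    simp [concatIndex, add_assoc]
  rw [hidx, concat2_natCast_add_of_lt_add u v hbn huv (by have := a.val_lt; omega)]
  simp

end Window

lemma Nat.card_subtype_sum {α β : Type*} [Finite α] [Finite β] (p : α ⊕ β → Prop) :
    Nat.card {x // p x} = Nat.card {a // p (.inl a)} + Nat.card {b // p (.inr b)} := by
  rw [Nat.card_congr Equiv.subtypeSum, Nat.card_sum]

theorem bWt_concat2 {n b : ℕ} [NeZero n] {F : Type*} [Zero F] {u v : ZMod n → F}
    (hbn : b ≤ n) (huv : ∀ i : ℕ, i + 1 < b → u i = v i) :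
    bWt b (concat2 u v) = bWt b u + bWt b v := by
  let e := Equiv.ofBijective _ (concatIndex_bijective n)
  rw [bWt, ← Nat.card_congr (e.subtypeEquiv fun _ => Iff.rfl), Nat.card_subtype_sum]
  congr 1 <;> refine Nat.card_congr (Equiv.subtypeEquivRight fun a =>
    exists_congr fun j => and_congr_right fun hj => ?_)
  · rw [Equiv.ofBijective_apply, concat2_concatIndex_inl_add hbn huv a hj]
  · rw [Equiv.ofBijective_apply, concat2_concatIndex_inr_add hbn huv a hj]

theorem stmt6_general (b n : ℕ) (hb : 0 < b) (hbn : b ≤ n)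
    (F : Type*) [Field F]
    (u v : ZMod n → F)
    (huv : ∀ i : ℕ, i + 1 < b → u ((i : ℕ) : ZMod n) = v ((i : ℕ) : ZMod n)) :
    bWt b (concat2 u v) = bWt b u + bWt b v := by
  have : NeZero n := ⟨by omega⟩
  exact bWt_concat2 hbn huv

/-- If `u_i = v_i` for all `i ∈ {0, …, b-2}`, then `wt_b((u,v)) = wt_b(u) + wt_b(v)`. -/
theorem stmt6 (q b n : ℕ) (hb : 0 < b) (hbn : b ≤ n)
    (F : Type*) [Field F] [Fintype F] (hF : Fintype.card F = q)
    (u v : ZMod n → F)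
    (huv : ∀ i : ℕ, i + 1 < b → u ((i : ℕ) : ZMod n) = v ((i : ℕ) : ZMod n)) :
    bWt b (concat2 u v) = bWt b u + bWt b v :=
  stmt6_general b n hb hbn F u v huv
end

section
/- Let q be a prime power and let b, n, s be positive integers with n ≥ b. For every c ∈ F_q^n, the s-fold repeated vector (c, c, …, c) ∈ F_q^{sn} (s copies of c concatenated) satisfies wt_b((c, …, c)) = s · wt_b(c). -/
/-- The `s`-fold repetition `(c, c, …, c) ∈ F^{sn}` of a vector `c ∈ F^n`. -/
def repeatVec {n : ℕ} {F : Type*} (s : ℕ) (c : ZMod n → F) : ZMod (s * n) → F :=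
  fun i => c ((i.val % n : ℕ) : ZMod n)

open Finset Function

theorem AddMonoidHom.card_filter_mem_mul_card_eq {G H : Type*} [AddGroup G] [Fintype G]
    [AddGroup H] [Fintype H] [DecidableEq H] {f : G →+ H} (hf : Surjective f) (t : Finset H) :
    #{g | f g ∈ t} * Fintype.card H = #t * Fintype.card G := by
  set k := #{g | f g = 0}
  have hfiber (x : H) : #{g | f g = x} = k :=
    card_fiber_eq_of_mem_range f (hf x) ⟨0, map_zero f⟩
  have hpre : #{g | f g ∈ t} = #t * k := by
    rw [card_eq_sum_card_fiberwise (f := f) (t := t) (fun g hg => by simpa using hg)]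
    rw [sum_congr rfl fun x hx => ?_, sum_const, smul_eq_mul]
    rw [← hfiber x, filter_filter]
    congr 1 with g
    simp only [mem_filter, mem_univ, true_and, and_iff_right_iff_imp]
    rintro rfl
    exact hx
  have huniv : Fintype.card G = Fintype.card H * k := by
    rw [← card_univ, card_eq_sum_card_fiberwise (f := f) (t := univ) (fun _ _ => mem_univ _)]
    simp only [hfiber, sum_const, smul_eq_mul, card_univ]
  rw [hpre, huniv]
  ring

theorem bWt_comp_castHom {m n : ℕ} [NeZero m] {F : Type*} [Zero F] (b : ℕ) (h : n ∣ m)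
    (c : ZMod n → F) :
    bWt b (c ∘ ZMod.castHom h (ZMod n)) * n = bWt b c * m := by
  classical
  have : NeZero n := ⟨by rintro rfl; exact NeZero.ne m (Nat.eq_zero_of_zero_dvd h)⟩
  set f := ZMod.castHom h (ZMod n)
  have hpre : {i | ∃ j < b, (c ∘ f) (i + j) ≠ 0} = f ⁻¹' {x | ∃ j < b, c (x + j) ≠ 0} := by
    ext i
    simp only [comp_apply, map_add, map_natCast, Set.mem_ofPred_eq, Set.mem_preimage]
  have key := (f : ZMod m →+ ZMod n).card_filter_mem_mul_card_eq (ZMod.castHom_surjective h)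
    {x | ∃ j < b, c (x + j) ≠ 0}
  rw [ZMod.card, ZMod.card] at key
  rw [bWt, bWt, hpre, Nat.card_eq_card_toFinset, Nat.card_eq_card_toFinset]
  convert key using 3 <;> ext <;> simp

theorem repeatVec_eq_comp_castHom {n s : ℕ} [NeZero (s * n)] {F : Type*} (c : ZMod n → F) :
    repeatVec s c = c ∘ ZMod.castHom (dvd_mul_left n s) (ZMod n) := by
  ext i
  rw [repeatVec, comp_apply, ZMod.natCast_mod, ZMod.natCast_val, ZMod.castHom_apply]

theorem bWt_repeatVec {n s : ℕ} [NeZero n] (hs : 0 < s) {F : Type*} [Zero F] (b : ℕ)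
    (c : ZMod n → F) : bWt b (repeatVec s c) = s * bWt b c := by
  have : NeZero (s * n) := ⟨Nat.mul_ne_zero hs.ne' (NeZero.ne n)⟩
  apply Nat.eq_of_mul_eq_mul_right (Nat.pos_of_neZero n)
  rw [repeatVec_eq_comp_castHom, bWt_comp_castHom]
  ring

theorem stmt7_general (b n s : ℕ) (hb : 0 < b) (hbn : b ≤ n) (hs : 0 < s)
    (F : Type*) [Field F]
    (c : ZMod n → F) :
    bWt b (repeatVec s c) = s * bWt b c := by
  have : NeZero n := ⟨by omega⟩
  exact bWt_repeatVec hs b c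

/-- The `s`-fold repeated vector satisfies `wt_b((c, …, c)) = s · wt_b(c)`. -/
theorem stmt7 (q b n s : ℕ) (hb : 0 < b) (hbn : b ≤ n) (hs : 0 < s)
    (F : Type*) [Field F] [Fintype F] (hF : Fintype.card F = q)
    (c : ZMod n → F) :
    bWt b (repeatVec s c) = s * bWt b c :=
  stmt7_general b n s hb hbn hs F c
end

section
/- Let q be a prime power and let s, k, b be positive integers with k ≥ b and gcd(k, q - 1) = 1. Then there exists an F_q-linear code of length s·(q^k - 1)/(q - 1) and dimension k in which every nonzero codeword has b-symbol weight exactly s·(q^k - q^{k-b})/(q - 1); in particular, its minimum b-symbol distance is s·(q^k - q^{k-b})/(q - 1). -/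
open Module Function

theorem bWt_zero {n : ℕ} {F : Type*} [Zero F] (b : ℕ) : bWt b (0 : ZMod n → F) = 0 := by
  simp [bWt]

theorem Nat.sub_one_le_pow_sub_pow {q m n : ℕ} (hq : 1 ≤ q) (h : m < n) :
    q - 1 ≤ q ^ n - q ^ m := by
  have h1 : q ^ m * q ≤ q ^ n := pow_succ q m ▸ Nat.pow_le_pow_right hq h
  have h2 : q - 1 ≤ q ^ m * (q - 1) := Nat.le_mul_of_pos_left _ (Nat.one_le_pow _ _ hq)
  rw [Nat.mul_sub_one] at h2
  omega

theorem Nat.count_add_count_not (p : ℕ → Prop) [DecidablePred p] (n : ℕ) :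
    Nat.count p n + Nat.count (fun k => ¬p k) n = n := by
  simp only [Nat.count_eq_card_filter_range]
  exact (Finset.range n).card_filter_add_card_filter_not p ▸ Finset.card_range n

theorem Nat.count_mul_of_periodic {p : ℕ → Prop} [DecidablePred p] {N : ℕ} (hp : Periodic p N)
    (s : ℕ) : Nat.count p (s * N) = s * Nat.count p N := by
  induction s with
  | zero => simp
  | succ s ih =>
    have hshift : (fun k => p (s * N + k)) = p := funext fun k => by
      rw [add_comm]; exact (hp.nat_mul s) k
    rw [Nat.succ_mul, Nat.count_add, ih]
    simp only [hshift, Nat.succ_mul]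

theorem ZMod.natCard_subtype_val_eq_count (n : ℕ) [NeZero n] (p : ℕ → Prop)
    [DecidablePred p] : Nat.card {i : ZMod n // p i.val} = Nat.count p n := by
  rw [Nat.count_eq_card_filter_range, ← Nat.card_eq_finsetCard]
  refine Nat.card_congr
    { toFun := fun i => ⟨i.1.val, by simp [i.1.val_lt, i.2]⟩
      invFun := fun k => ⟨k.1, by
        obtain ⟨hk, hpk⟩ := Finset.mem_filter.mp k.2
        rwa [ZMod.val_cast_of_lt (Finset.mem_range.mp hk)]⟩
      left_inv := fun i => Subtype.ext (ZMod.natCast_zmod_val i.1)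
      right_inv := fun k => Subtype.ext
        (ZMod.val_cast_of_lt (Finset.mem_range.mp (Finset.mem_filter.mp k.2).1)) }

namespace Subgroup

variable {G : Type*} [CommGroup G] (H : Subgroup G) {P : G → Prop} (γ : G)

instance neZero_index [Finite G] : NeZero H.index := ⟨H.index_ne_zero_of_finite⟩

theorem pow_mod_index_iff (hP : ∀ y, ∀ h ∈ H, P (y * h) ↔ P y) (t : ℕ) :
    P (γ ^ (t % H.index)) ↔ P (γ ^ t) := by
  conv_rhs => rw [← Nat.mod_add_div t H.index, pow_add, pow_mul]
  exact (hP _ _ (pow_mem (H.pow_index_mem γ) _)).symm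

theorem pow_iff_of_modEq (hP : ∀ y, ∀ h ∈ H, P (y * h) ↔ P y) {a a' : ℕ}
    (h : a ≡ a' [MOD H.index]) : P (γ ^ a) ↔ P (γ ^ a') := by
  rw [← pow_mod_index_iff H γ hP a, h, pow_mod_index_iff H γ hP]

theorem periodic_pow_index (hP : ∀ y, ∀ h ∈ H, P (y * h) ↔ P y) :
    Periodic (fun t => P (γ ^ t)) H.index := fun t =>
  propext (pow_iff_of_modEq H γ hP (Nat.add_mod_right t _))

variable [Finite G] {γ}

theorem bijective_pow_val_mul_of_forall_mem_zpowers (hγ : ∀ y, y ∈ zpowers γ) :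
    Bijective fun p : ZMod H.index × H => γ ^ p.1.val * p.2 := by
  refine (Nat.bijective_iff_surjective_and_card _).mpr ⟨fun y => ?_, ?_⟩
  · obtain ⟨t, rfl⟩ := mem_powers_iff_mem_zpowers.mpr (hγ y)
    refine ⟨(t, ⟨(γ ^ H.index) ^ (t / H.index), pow_mem (H.pow_index_mem γ) _⟩), ?_⟩
    dsimp only
    rw [ZMod.val_natCast, ← pow_mul, ← pow_add, Nat.mod_add_div]
  · rw [Nat.card_prod, Nat.card_zmod, H.index_mul_card]

theorem count_pow_mul_card_eq (hγ : ∀ y, y ∈ zpowers γ)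
    (hP : ∀ y, ∀ h ∈ H, P (y * h) ↔ P y) [DecidablePred P] :
    Nat.count (fun t => P (γ ^ t)) H.index * Nat.card H = Nat.card {y // P y} := by
  rw [← ZMod.natCard_subtype_val_eq_count, ← Nat.card_prod,
    ← Nat.card_congr ((Equiv.ofBijective _
      (H.bijective_pow_val_mul_of_forall_mem_zpowers hγ)).subtypeEquivOfSubtype)]
  exact Nat.card_congr (Equiv.prodSubtypeFstEquivSubtypeProd.symm.trans
    (Equiv.subtypeEquivRight fun p => (hP _ _ p.2.2).symm))

end Subgroup

section Field

variable (F K : Type*) [Field F] [Field K] [Algebra F K]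

def baseUnits : Subgroup Kˣ := (Units.map (algebraMap F K).toMonoidHom).range

variable {F K}

theorem natCard_baseUnits : Nat.card (baseUnits F K) = Nat.card F - 1 := by
  rw [← Nat.card_units]
  exact (Nat.card_congr (MonoidHom.ofInjective (Units.map_injective
    (f := (algebraMap F K).toMonoidHom) (algebraMap F K).injective)).toEquiv).symm

theorem Module.Dual.apply_mul_eq_zero_iff_of_mem_baseUnits (f : Dual F K) {h : Kˣ}
    (hh : h ∈ baseUnits F K) (y : K) : f (y * h) = 0 ↔ f y = 0 := by
  obtain ⟨u, rfl⟩ := hh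
  change f (y * algebraMap F K u) = 0 ↔ _
  rw [mul_comm, ← Algebra.smul_def, map_smul, smul_eq_mul, mul_eq_zero, or_iff_right u.ne_zero]

theorem index_baseUnits_mul [Finite K] :
    (baseUnits F K).index * (Nat.card F - 1) = Nat.card F ^ finrank F K - 1 := by
  have : Finite F := Finite.of_injective _ (algebraMap F K).injective
  have : Module.Finite F K := Module.Finite.of_finite
  rw [← Module.natCard_eq_pow_finrank, ← Nat.card_units K, ← (baseUnits F K).index_mul_card,
    natCard_baseUnits]

theorem Submodule.natCard_units_mem [Finite K] (W : Submodule F K) :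
    Nat.card {y : Kˣ // (y : K) ∈ W} = Nat.card W - 1 := by
  classical
  have e : {y : Kˣ // (y : K) ∈ W} ≃ {x : W // x ≠ 0} :=
    { toFun := fun y => ⟨⟨y.1, y.2⟩, fun h => y.1.ne_zero (congrArg Subtype.val h)⟩
      invFun := fun x => ⟨Units.mk0 x.1 fun h => x.2 (Subtype.ext h), x.1.2⟩
      left_inv := fun y => by ext; rfl
      right_inv := fun x => by ext; rfl }
  rw [Nat.card_congr e, ← Nat.card_congr (Equiv.optionSubtypeNe (0 : W)), Finite.card_option,
    Nat.add_sub_cancel]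

theorem Module.Dual.surjective_pi_comp_mulRight {f : Dual F K} (hf : f ≠ 0) {ι : Type*}
    [Finite ι] {a : ι → K} (ha : LinearIndependent F a) :
    Surjective (LinearMap.pi fun j => f ∘ₗ LinearMap.mulRight F (a j)) := by
  classical
  have := Fintype.ofFinite ι
  -- a functional `g` on `ι → F` killing the image gives `p = ∑ g(eⱼ) aⱼ` with `f (y * p) = 0`
  rw [← LinearMap.dualMap_injective_iff, ← LinearMap.ker_eq_bot, eq_bot_iff]
  intro g hg
  rw [LinearMap.mem_ker] at hg
  set p := ∑ j, g (Pi.single j 1) • a j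
  have hp : ∀ y, f (y * p) = 0 := fun y => by
    have := LinearMap.congr_fun hg y
    rw [LinearMap.dualMap_apply, LinearMap.zero_apply, LinearMap.pi_apply_eq_sum_univ g] at this
    have hsingle : ∀ i : ι, (fun j => if i = j then (1 : F) else 0) = Pi.single i 1 := fun i =>
      funext fun j => by rw [Pi.single_apply]; exact if_congr eq_comm rfl rfl
    simpa [p, hsingle, Finset.mul_sum, mul_comm] using this
  have hsum : p = 0 := by
    by_contra hne
    obtain ⟨z, hz⟩ : ∃ z, f z ≠ 0 := by simpa [DFunLike.ext_iff] using hf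
    exact hz (by simpa [hne] using hp (z * p⁻¹))
  have hc := Fintype.linearIndependent_iff.mp ha _ hsum
  rw [Submodule.mem_bot]
  exact LinearMap.pi_ext' fun j => LinearMap.ext_ring (by simpa using hc j)

theorem linearIndependent_pow_of_forall_mem_zpowers [Finite K] {γ : Kˣ}
    (hγ : ∀ y, y ∈ Subgroup.zpowers γ) {b : ℕ} (hb : b ≤ finrank F K) :
    LinearIndependent F fun j : Fin b => (γ : K) ^ (j : ℕ) := by
  have htop : IntermediateField.adjoin F {(γ : K)} = ⊤ := by
    refine eq_top_iff.mpr fun x _ => ?_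
    by_cases hx : x = 0
    · exact hx ▸ zero_mem _
    obtain ⟨n, hn⟩ := hγ (Units.mk0 x hx)
    rw [← Units.val_mk0 hx, ← hn, Units.val_zpow_eq_zpow_val]
    exact zpow_mem (IntermediateField.mem_adjoin_simple_self F _) n
  have hdeg : (minpoly F (γ : K)).natDegree = finrank F K := by
    rw [← IntermediateField.adjoin.finrank (IsIntegral.of_finite F _), htop,
      IntermediateField.finrank_top']
  exact (linearIndependent_pow (γ : K)).comp (Fin.castLE (hdeg ▸ hb)) (Fin.castLE_injective _)

theorem natCard_units_dual_mul_pow_eq_zero [Finite K] {f : Dual F K} (hf : f ≠ 0) {γ : Kˣ}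
    (hγ : ∀ y, y ∈ Subgroup.zpowers γ) {b : ℕ} (hb : b ≤ finrank F K) :
    Nat.card {y : Kˣ // ∀ j < b, f ↑(y * γ ^ j) = 0} =
      Nat.card F ^ (finrank F K - b) - 1 := by
  have : Finite F := Finite.of_injective _ (algebraMap F K).injective
  have : Module.Finite F K := Module.Finite.of_finite
  set L := LinearMap.pi fun j : Fin b => f ∘ₗ LinearMap.mulRight F ((γ : K) ^ (j : ℕ))
  have hL := f.surjective_pi_comp_mulRight hf (linearIndependent_pow_of_forall_mem_zpowers hγ hb)
  have hrank : finrank F (LinearMap.ker L) = finrank F K - b := by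
    have := LinearMap.finrank_range_add_finrank_ker L
    rw [LinearMap.range_eq_top.mpr hL, finrank_top, Module.finrank_fin_fun] at this
    omega
  rw [← hrank, ← Module.natCard_eq_pow_finrank, ← Submodule.natCard_units_mem]
  refine Nat.card_congr (Equiv.subtypeEquivRight fun y => ?_)
  simp [L, funext_iff, Fin.forall_iff]

variable (F) in
def singerWord (γ : Kˣ) (n : ℕ) : Dual F K →ₗ[F] ZMod n → F :=
  LinearMap.pi fun i => Dual.eval F K ↑(γ ^ i.val)

open Classical in
theorem bWt_singerWord (f : Dual F K) (γ : Kˣ) (b : ℕ) {n : ℕ} [NeZero n]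
    (hn : (baseUnits F K).index ∣ n) :
    bWt b (singerWord F γ n f) =
      Nat.count (fun t => ¬∀ j < b, f ↑(γ ^ t * γ ^ j) = 0) n := by
  rw [bWt, ← ZMod.natCard_subtype_val_eq_count]
  refine Nat.card_congr (Equiv.subtypeEquivRight fun i => ?_)
  simp only [Set.mem_ofPred_eq, not_forall, exists_prop, ← pow_add]
  refine exists_congr fun j => and_congr_right fun _ => not_congr ?_
  refine (baseUnits F K).pow_iff_of_modEq (P := fun y : Kˣ => f y = 0) γ
    (fun y h hh => f.apply_mul_eq_zero_iff_of_mem_baseUnits hh y) (Nat.ModEq.of_dvd hn ?_)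
  rw [ZMod.val_add, ZMod.val_natCast]
  exact (Nat.mod_modEq _ _).trans (Nat.ModEq.add_left _ (Nat.mod_modEq _ _))

theorem bWt_singerWord_of_ne_zero [Finite K] {γ : Kˣ} (hγ : ∀ y, y ∈ Subgroup.zpowers γ)
    {f : Dual F K} (hf : f ≠ 0) {s b : ℕ} [NeZero s] (hb : b ≤ finrank F K) :
    bWt b (singerWord F γ (s * (baseUnits F K).index) f) =
      s * ((Nat.card F ^ finrank F K - Nat.card F ^ (finrank F K - b)) / (Nat.card F - 1)) := by
  classical
  have : Finite F := Finite.of_injective _ (algebraMap F K).injective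
  set W : Kˣ → Prop := fun y => ∀ j < b, f ↑(y * γ ^ j) = 0
  have hW : ∀ y, ∀ h ∈ baseUnits F K, W (y * h) ↔ W y := fun y h hh =>
    forall₂_congr fun j _ => by
      rw [mul_right_comm, Units.val_mul]; exact f.apply_mul_eq_zero_iff_of_mem_baseUnits hh _
  have hzero : Nat.count (fun t => W (γ ^ t)) (baseUnits F K).index * (Nat.card F - 1) =
      Nat.card F ^ (finrank F K - b) - 1 := by
    rw [← natCard_baseUnits (K := K), (baseUnits F K).count_pow_mul_card_eq hγ hW,
      natCard_units_dual_mul_pow_eq_zero hf hγ hb]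
  have hsplit : Nat.count (fun t => W (γ ^ t)) (baseUnits F K).index * (Nat.card F - 1) +
      Nat.count (fun t => ¬W (γ ^ t)) (baseUnits F K).index * (Nat.card F - 1) =
      Nat.card F ^ finrank F K - 1 := by
    rw [← add_mul, Nat.count_add_count_not, index_baseUnits_mul]
  have hq : 1 < Nat.card F := Finite.one_lt_card
  have hpow : 1 ≤ Nat.card F ^ (finrank F K - b) := Nat.one_le_pow _ _ (by omega)
  have hle : Nat.card F ^ (finrank F K - b) ≤ Nat.card F ^ finrank F K :=
    Nat.pow_le_pow_right (by omega) (Nat.sub_le _ b)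
  rw [bWt_singerWord f γ b (dvd_mul_left _ _)]
  change Nat.count (fun t => ¬W (γ ^ t)) (s * (baseUnits F K).index) = _
  rw [Nat.count_mul_of_periodic
    ((baseUnits F K).periodic_pow_index (P := (¬W ·)) γ fun y h hh => not_congr (hW y h hh)) s]
  exact congrArg (s * ·) (Nat.div_eq_of_eq_mul_left (by omega) (by omega)).symm

theorem injective_singerWord [Finite K] {γ : Kˣ} (hγ : ∀ y, y ∈ Subgroup.zpowers γ)
    (s : ℕ) [NeZero s] : Injective (singerWord F γ (s * (baseUnits F K).index)) := by
  have : Finite F := Finite.of_injective _ (algebraMap F K).injective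
  have : Module.Finite F K := Module.Finite.of_finite
  have hq : 1 < Nat.card F := Finite.one_lt_card
  have hk : 0 < finrank F K := finrank_pos
  -- the weight formula for `b = 1` is positive
  refine (injective_iff_map_eq_zero _).mpr fun f hf => by_contra fun hf0 => ?_
  have hwt := bWt_singerWord_of_ne_zero hγ hf0 (s := s) hk
  rw [hf, bWt_zero, eq_comm] at hwt
  exact Nat.mul_ne_zero (NeZero.ne s)
    (Nat.div_pos (Nat.sub_one_le_pow_sub_pow hq.le (by omega)) (by omega)).ne' hwt

end Field

theorem FiniteField.exists_finrank_eq (F : Type*) [Field F] [Finite F] (k : ℕ) [NeZero k] :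
    ∃ (K : Type) (_ : Field K) (_ : Algebra F K) (_ : Finite K), finrank F K = k :=
  have := Fact.mk (CharP.char_is_prime F (ringChar F))
  ⟨FiniteField.Extension F (ringChar F) k, inferInstance, inferInstance, inferInstance,
    FiniteField.finrank_extension F (ringChar F) k⟩

theorem stmt8_general (q s k b : ℕ) (hs : 0 < s) (hb : 0 < b) (hkb : b ≤ k)
    (F : Type*) [Field F] [Fintype F] (hF : Fintype.card F = q) :
    ∃ C : Submodule F (ZMod (s * ((q ^ k - 1) / (q - 1))) → F),
      Module.finrank F C = k ∧
      (∀ c ∈ C, c ≠ 0 → bWt b c = s * ((q ^ k - q ^ (k - b)) / (q - 1))) ∧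
      IsLeast {w | ∃ c ∈ C, c ≠ 0 ∧ bWt b c = w}
        (s * ((q ^ k - q ^ (k - b)) / (q - 1))) := by
  have : NeZero k := ⟨by omega⟩
  have : NeZero s := ⟨by omega⟩
  obtain ⟨K, _, _, _, rfl⟩ := FiniteField.exists_finrank_eq F k
  obtain ⟨γ, hγ⟩ := IsCyclic.exists_generator (α := Kˣ)
  rw [← Nat.card_eq_fintype_card] at hF
  subst hF
  have hq : 1 < Nat.card F := Finite.one_lt_card
  rw [Nat.div_eq_of_eq_mul_left (by omega) (index_baseUnits_mul (F := F) (K := K)).symm]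
  set ψ := singerWord F γ (s * (baseUnits F K).index)
  have hψ : Injective ψ := injective_singerWord hγ s
  have hwt (c) (hc : c ∈ LinearMap.range ψ) (hc0 : c ≠ 0) :=
    have ⟨f, hf⟩ := hc
    hf ▸ bWt_singerWord_of_ne_zero hγ (by rintro rfl; exact hc0 (hf ▸ map_zero ψ)) hkb
  obtain ⟨f, hf⟩ := exists_ne (0 : Dual F K)
  have hψf : ψ f ≠ 0 := (map_ne_zero_iff ψ hψ).mpr hf
  refine ⟨LinearMap.range ψ, ?_, hwt, ⟨ψ f, ⟨f, rfl⟩, hψf, hwt _ ⟨f, rfl⟩ hψf⟩, ?_⟩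
  · rw [LinearMap.finrank_range_of_inj hψ, Subspace.dual_finrank_eq]
  · rintro _ ⟨c, hc, hc0, rfl⟩
    exact (hwt c hc hc0).ge

/-- If `gcd(k, q-1) = 1` and `k ≥ b`, then there exists an `F_q`-linear code of length
`s·(q^k-1)/(q-1)` and dimension `k` in which every nonzero codeword has `b`-symbol weight
exactly `s·(q^k - q^{k-b})/(q-1)`; in particular its minimum `b`-symbol distance equals
this value. -/
theorem stmt8 (q s k b : ℕ) (hs : 0 < s) (hb : 0 < b) (hkb : b ≤ k)
    (hgcd : Nat.gcd k (q - 1) = 1)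
    (F : Type*) [Field F] [Fintype F] (hF : Fintype.card F = q) :
    ∃ C : Submodule F (ZMod (s * ((q ^ k - 1) / (q - 1))) → F),
      Module.finrank F C = k ∧
      (∀ c ∈ C, c ≠ 0 → bWt b c = s * ((q ^ k - q ^ (k - b)) / (q - 1))) ∧
      IsLeast {w | ∃ c ∈ C, c ≠ 0 ∧ bWt b c = w}
        (s * ((q ^ k - q ^ (k - b)) / (q - 1))) :=
  stmt8_general q s k b hs hb hkb F hF
end

section
/- Let q be a prime power, let k ≥ b ≥ 1 be integers, and let γ be a primitive element (a generator of the multiplicative group) of F_{q^k}. For g ∈ F_{q^k} and y ∈ F_q, let c_{g,y} = (Tr_{q^k/q}(g·γ^i) + y)_{i=0}^{q^k - 2} ∈ F_q^{q^k - 1}. Then the b-symbol weight of c_{g,y} equals: 0 if g = 0 and y = 0; q^k - 1 if g = 0 and y ≠ 0; q^k - q^{k-b} if g ≠ 0 and y = 0; and q^k - q^{k-b} - 1 if g ≠ 0 and y ≠ 0. -/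
open Module

lemma aux_fiber_card {F V W : Type*} [Field F] [Fintype F]
    [AddCommGroup V] [Module F V] [Fintype V]
    [AddCommGroup W] [Module F W] [Fintype W]
    (φ : V →ₗ[F] W) (hφ : Function.Surjective φ) (w : W) :
    Nat.card {v : V // φ v = w} =
      Fintype.card F ^ (finrank F V - finrank F W) := by
  classical
  obtain ⟨v0, hv0⟩ := hφ w
  have e : {v : V // φ v = w} ≃ LinearMap.ker φ :=
    { toFun := fun v => ⟨v.1 - v0, by simp [LinearMap.mem_ker, map_sub, v.2, hv0]⟩
      invFun := fun z => ⟨z.1 + v0, by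
        have := LinearMap.mem_ker.mp z.2
        simp [map_add, this, hv0]⟩
      left_inv := fun v => by simp
      right_inv := fun z => by simp }
  have hker : finrank F (LinearMap.ker φ) = finrank F V - finrank F W := by
    have h1 := LinearMap.finrank_range_add_finrank_ker φ
    rw [LinearMap.range_eq_top.2 hφ, finrank_top] at h1
    omega
  rw [Nat.card_congr e, Nat.card_eq_fintype_card,
    card_eq_pow_finrank (K := F) (V := LinearMap.ker φ), hker]


open Classical

/-- The `b`-symbol weight of the codeword `c_{g,y} = (Tr(g·γ^i) + y)_{i=0}^{q^k-2}` equals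
`0` if `g = 0, y = 0`; `q^k - 1` if `g = 0, y ≠ 0`; `q^k - q^{k-b}` if `g ≠ 0, y = 0`;
and `q^k - q^{k-b} - 1` if `g ≠ 0, y ≠ 0`. -/
theorem stmt11 (q k b : ℕ) (hb : 1 ≤ b) (hkb : b ≤ k)
    (F E : Type*) [Field F] [Fintype F] [Field E] [Fintype E] [Algebra F E]
    (hF : Fintype.card F = q) (hE : Fintype.card E = q ^ k)
    (γ : E) (hγ : ∀ x : E, x ≠ 0 → ∃ m : ℕ, γ ^ m = x)
    (g : E) (y : F) :
    bWt b (fun i : ZMod (q ^ k - 1) => Algebra.trace F E (g * γ ^ i.val) + y)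
      = if g = 0 then (if y = 0 then 0 else q ^ k - 1)
        else (if y = 0 then q ^ k - q ^ (k - b) else q ^ k - q ^ (k - b) - 1) := by
  classical
  have hq2 : 2 ≤ q := hF ▸ Fintype.one_lt_card
  have hk1 : 1 ≤ k := le_trans hb hkb
  have hqk2 : 2 ≤ q ^ k := le_trans hq2 (Nat.le_self_pow (by omega) q)
  set n := q ^ k - 1 with hn
  haveI : NeZero n := ⟨by omega⟩
  have hfinrank : finrank F E = k := by
    have h := card_eq_pow_finrank (K := F) (V := E)
    rw [hF, hE] at h
    exact (Nat.pow_right_injective hq2 h.symm)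
  -- case g = 0
  by_cases hg : g = 0
  · subst hg
    simp only [zero_mul, map_zero, zero_add, if_true]
    by_cases hy : y = 0
    · simp [bWt, hy]
    · have hset : {i : ZMod n | ∃ j < b, (fun _ : ZMod n => y) (i + (j : ZMod n)) ≠ 0}
          = Set.univ := by
        ext i; simp only [Set.mem_setOf_eq, Set.mem_univ, iff_true]
        exact ⟨0, hb, hy⟩
      simp only [bWt, hy, if_false]
      rw [hset]
      rw [Nat.card_congr (Equiv.Set.univ (ZMod n)), Nat.card_eq_fintype_card, ZMod.card]
  · -- γ = 0 degenerate analysis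
    have hdeg : γ = 0 → q = 2 ∧ k = 1 ∧ b = 1 := by
      intro h0
      have hle : ∀ x : E, x = 0 ∨ x = 1 := by
        intro x
        by_cases hx : x = 0
        · exact Or.inl hx
        · obtain ⟨m, hm⟩ := hγ x hx
          rcases Nat.eq_zero_or_pos m with h | h
          · right; rw [← hm, h, pow_zero]
          · exfalso; rw [h0, zero_pow (by omega)] at hm; exact hx hm.symm
      have hcard2 : Fintype.card E ≤ 2 := by
        have : (Finset.univ : Finset E) ⊆ {0, 1} := by
          intro x _
          rcases hle x with h | h <;> simp [h]
        calc Fintype.card E = (Finset.univ : Finset E).card := rfl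
          _ ≤ ({0, 1} : Finset E).card := Finset.card_le_card this
          _ ≤ 2 := Finset.card_insert_le _ _ |>.trans (by simp)
      have hqk : q ^ k = 2 := le_antisymm (hE ▸ hcard2) hqk2
      have hq : q = 2 := le_antisymm (by
        calc q ≤ q ^ k := Nat.le_self_pow (by omega) q
          _ = 2 := hqk) hq2
      have hk : k = 1 := by
        by_contra hk
        have : 2 ≤ k := by omega
        have : q ^ 2 ≤ q ^ k := Nat.pow_le_pow_right (by omega) this
        have : 4 ≤ q ^ k := le_trans (by nlinarith) this
        omega
      exact ⟨hq, hk, by omega⟩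
    have hn1 : γ = 0 → n = 1 := by
      intro h0
      obtain ⟨hq, hk, -⟩ := hdeg h0
      simp [hn, hq, hk]
    -- key power lemma
    have hkey : ∀ (i : ZMod n) (j : ℕ), j < b →
        γ ^ ((i + (j : ZMod n)).val) = γ ^ i.val * γ ^ j := by
      by_cases h0 : γ = 0
      · obtain ⟨-, -, hb1⟩ := hdeg h0
        have hn' := hn1 h0
        intro i j hj
        have hj0 : j = 0 := by omega
        subst hj0
        simp
      · have hγn : γ ^ n = 1 := by
          have := FiniteField.pow_card_sub_one_eq_one γ h0
          rwa [hE] at this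
        intro i j hj
        have hval : ((i + (j : ZMod n))).val = (i.val + j) % n := by
          rw [ZMod.val_add, ZMod.val_natCast]
          conv_rhs => rw [Nat.add_mod, Nat.mod_eq_of_lt (ZMod.val_lt i)]
        rw [hval, ← pow_eq_pow_mod _ hγn, pow_add]
    have hvalne : ∀ i : ZMod n, γ ^ i.val ≠ 0 := by
      by_cases h0 : γ = 0
      · intro i
        have h1 := hn1 h0
        have h2 := ZMod.val_lt i
        have : i.val = 0 := by omega
        rw [this, pow_zero]
        exact one_ne_zero
      · exact fun i => pow_ne_zero _ h0
    have hbijfun : Function.Bijective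
        (fun i : ZMod n => (⟨γ ^ i.val, hvalne i⟩ : {x : E // x ≠ 0})) := by
      rw [Fintype.bijective_iff_surjective_and_card]
      constructor
      · rintro ⟨x, hx⟩
        obtain ⟨m, hm⟩ := hγ x hx
        by_cases h0 : γ = 0
        · have hm0 : m = 0 := by
            by_contra hm0
            rw [h0, zero_pow hm0] at hm
            exact hx hm.symm
          refine ⟨0, Subtype.ext ?_⟩
          simp only [ZMod.val_zero, pow_zero]
          rw [← hm, hm0, pow_zero]
        · have hγn : γ ^ n = 1 := by
            have := FiniteField.pow_card_sub_one_eq_one γ h0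
            rwa [hE] at this
          refine ⟨(m : ZMod n), Subtype.ext ?_⟩
          simp only
          rw [ZMod.val_natCast, ← pow_eq_pow_mod _ hγn, hm]
      · rw [ZMod.card]
        have h1 : Fintype.card {x : E // x ≠ 0} = Fintype.card E - 1 := by
          have := Fintype.card_subtype_compl (fun x : E => x = 0)
          rw [Fintype.card_subtype_eq (0 : E)] at this
          convert this using 2
        rw [h1, hE]
    -- the linear map u ↦ (Tr(u·γ^j))_{j < b}
    set w : Fin b → F := fun _ => -y with hw
    set φ : E →ₗ[F] (Fin b → F) :=
      LinearMap.pi (fun j : Fin b => (Algebra.traceForm F E).flip (γ ^ (j : ℕ))) with hφ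
    have hφapp : ∀ (u : E) (j : Fin b),
        φ u j = Algebra.trace F E (u * γ ^ (j : ℕ)) := by
      intro u j
      simp [hφ, LinearMap.pi_apply, LinearMap.flip_apply, Algebra.traceForm_apply]
    -- power basis generated by γ
    haveI : Algebra.IsSeparable F E := inferInstance
    have hnd := traceForm_nondegenerate F E
    have hint : IsIntegral F γ := Algebra.IsIntegral.isIntegral γ
    have htop : Algebra.adjoin F {γ} = ⊤ := by
      rw [eq_top_iff]
      rintro x -
      by_cases hx : x = 0
      · rw [hx]; exact Subalgebra.zero_mem _
      · obtain ⟨m, hm⟩ := hγ x hx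
        rw [← hm]
        exact pow_mem (Algebra.subset_adjoin (Set.mem_singleton γ)) m
    set pb : PowerBasis F E := (Algebra.adjoin.powerBasis hint).map
      ((Subalgebra.equivOfEq _ ⊤ htop).trans Subalgebra.topEquiv) with hpb
    have hgen : pb.gen = γ := by simp [hpb]
    have hdim : pb.dim = k := by rw [← pb.finrank, hfinrank]
    have hsurj : Function.Surjective φ := by
      intro c
      set f : E →ₗ[F] F :=
        pb.basis.constr F (fun i => if h : (i : ℕ) < b then c ⟨i, h⟩ else 0) with hf
      refine ⟨((Algebra.traceForm F E).toDual hnd).symm f, funext fun j => ?_⟩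
      have hjd : (j : ℕ) < pb.dim := lt_of_lt_of_le j.2 (hdim ▸ hkb)
      have hpow : γ ^ (j : ℕ) = pb.basis ⟨j, hjd⟩ := by rw [pb.basis_eq_pow, hgen]
      rw [hφapp]
      rw [show Algebra.trace F E (((Algebra.traceForm F E).toDual hnd).symm f * γ ^ (j : ℕ))
          = (Algebra.traceForm F E) (((Algebra.traceForm F E).toDual hnd).symm f) (γ ^ (j : ℕ))
          from rfl]
      rw [LinearMap.BilinForm.apply_toDual_symm_apply, hpow, hf, Basis.constr_basis]
      simp [j.2]
    have hfib : Nat.card {u : E // φ u = w} = q ^ (k - b) := by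
      rw [aux_fiber_card φ hsurj w, hF, hfinrank, Module.finrank_fin_fun]
    -- rewrite the weight set as the complement of the all-zero-window set
    simp only [bWt]
    have hAZ : {i : ZMod n | ∃ j < b,
          (fun i : ZMod n => Algebra.trace F E (g * γ ^ i.val) + y) (i + (j : ZMod n)) ≠ 0}
        = {i : ZMod n | ∀ j < b, Algebra.trace F E ((g * γ ^ i.val) * γ ^ j) = -y}ᶜ := by
      ext i
      simp only [Set.mem_setOf_eq, Set.mem_compl_iff]
      push_neg
      apply exists_congr
      intro j
      apply and_congr_right
      intro hj
      rw [hkey i j hj, ← mul_assoc, Ne, add_eq_zero_iff_eq_neg]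
    rw [hAZ]
    have hcompl : Nat.card
        ↥({i : ZMod n | ∀ j < b, Algebra.trace F E ((g * γ ^ i.val) * γ ^ j) = -y}ᶜ)
        = n - Nat.card
          ↥{i : ZMod n | ∀ j < b, Algebra.trace F E ((g * γ ^ i.val) * γ ^ j) = -y} := by
      rw [Nat.card_eq_fintype_card, Nat.card_eq_fintype_card, Fintype.card_compl_set, ZMod.card]
    rw [hcompl]
    -- transport the zero-window set to a fiber of φ
    have hZ : Nat.card
        ↥{i : ZMod n | ∀ j < b, Algebra.trace F E ((g * γ ^ i.val) * γ ^ j) = -y}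
        = Nat.card {u : E // u ≠ 0 ∧ φ u = w} := by
      apply Nat.card_congr
      refine Equiv.ofBijective
        (fun ip => ⟨g * γ ^ (ip.1).val, mul_ne_zero hg (hvalne _), funext fun j => ?_⟩) ⟨?_, ?_⟩
      · rw [hφapp]
        exact ip.2 j j.2
      · rintro ⟨i, hi⟩ ⟨i', hi'⟩ hii
        have h1 : g * γ ^ i.val = g * γ ^ i'.val := congrArg Subtype.val hii
        have h2 : γ ^ i.val = γ ^ i'.val := mul_left_cancel₀ hg h1
        have := hbijfun.1 (a₁ := i) (a₂ := i') (Subtype.ext h2)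
        exact Subtype.ext this
      · rintro ⟨u, hu, hfu⟩
        have hx : g⁻¹ * u ≠ 0 := mul_ne_zero (inv_ne_zero hg) hu
        obtain ⟨i, hi⟩ := hbijfun.2 ⟨g⁻¹ * u, hx⟩
        have hival : γ ^ i.val = g⁻¹ * u := congrArg Subtype.val hi
        have hgu : g * γ ^ i.val = u := by
          rw [hival, ← mul_assoc, mul_inv_cancel₀ hg, one_mul]
        refine ⟨⟨i, fun j hj => ?_⟩, Subtype.ext ?_⟩
        · have := congrFun hfu ⟨j, hj⟩
          rw [hφapp] at this
          rw [hgu, this]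
        · exact hgu
    rw [hZ]
    -- final case analysis on y
    by_cases hy : y = 0
    · have h0mem : (0 : E) ∈ {u : E | φ u = w} := by
        show φ 0 = w
        funext j
        rw [map_zero]
        simp [hw, hy]
      have hsplit : Nat.card {u : E // u ≠ 0 ∧ φ u = w} + 1
          = Nat.card {u : E // φ u = w} := by
        have he1 : Nat.card {u : E // u ≠ 0 ∧ φ u = w}
            = ({u : E | φ u = w} \ {0}).ncard := by
          rw [← Nat.card_coe_set_eq]
          apply Nat.card_congr
          apply Equiv.subtypeEquivRight
          intro u
          simp only [Set.mem_diff, Set.mem_setOf_eq, Set.mem_singleton_iff]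
          tauto
        rw [he1,
          show Nat.card {u : E // φ u = w} = ({u : E | φ u = w}).ncard from
            Nat.card_coe_set_eq _]
        exact Set.ncard_diff_singleton_add_one h0mem
      have hval : Nat.card {u : E // u ≠ 0 ∧ φ u = w} = q ^ (k - b) - 1 := by omega
      rw [hval]
      have h1 : 1 ≤ q ^ (k - b) := Nat.one_le_pow _ _ (by omega)
      have h2 : q ^ (k - b) ≤ q ^ k := Nat.pow_le_pow_right (by omega) (by omega)
      simp only [if_neg hg, if_pos hy]
      omega
    · have hiff : ∀ u : E, φ u = w ↔ (u ≠ 0 ∧ φ u = w) := by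
        intro u
        constructor
        · intro h
          refine ⟨?_, h⟩
          rintro rfl
          have := congrFun h ⟨0, hb⟩
          rw [map_zero] at this
          have : (0 : F) = -y := this
          exact hy (by simpa using this.symm)
        · exact fun h => h.2
      have := Nat.card_congr (Equiv.subtypeEquivRight hiff)
      rw [← this, hfib]
      have h1 : 1 ≤ q ^ (k - b) := Nat.one_le_pow _ _ (by omega)
      have h2 : q ^ (k - b) ≤ q ^ k := Nat.pow_le_pow_right (by omega) (by omega)
      simp only [if_neg hg, if_neg hy]
      omega
end

section
/- Let q ≥ 2 and k ≥ b ≥ 1 be integers. Then Σ_{i=0}^{k} ⌈q^{b-1}·(q^k - q^{k-b})/q^i⌉ = (q^b - 1)·(q^k - 1)/(q - 1) + q^{b-1}. -/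
/-!
The numerator factors as `q ^ (k - 1) * (q ^ b - 1)`. Hence for `i < k` the `i`-th quotient is
the integer `q ^ (k - 1 - i) * (q ^ b - 1)`, and these add up to `(q ^ b - 1)` times the geometric
sum `(q ^ k - 1) / (q - 1)`. The last quotient is `q ^ (b - 1) - 1 / q`, whose ceiling is
`q ^ (b - 1)` because `0 < 1 / q < 1`.
-/

open Finset

theorem Int.ceil_intCast_sub_of_nonneg_of_lt_one {K : Type*} [Field K] [LinearOrder K]
    [IsStrictOrderedRing K] [FloorRing K] (z : ℤ) {x : K} (hx₀ : 0 ≤ x) (hx₁ : x < 1) :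
    ⌈(z : K) - x⌉ = z := by
  rw [sub_eq_add_neg, Int.ceil_intCast_add,
    Int.ceil_eq_zero_iff.mpr ⟨neg_lt_neg hx₁, neg_nonpos.mpr hx₀⟩, add_zero]

theorem Nat.pow_pred_mul_pow_sub_pow (q : ℕ) {b k : ℕ} (hb : 1 ≤ b) (hbk : b ≤ k) :
    q ^ (b - 1) * (q ^ k - q ^ (k - b)) = q ^ (k - 1) * (q ^ b - 1) := by
  rw [Nat.mul_sub, Nat.mul_sub, mul_one, ← pow_add, ← pow_add, ← pow_add]
  congr 2 <;> omega

section Ceil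

variable {K : Type*} [Field K] [LinearOrder K] [IsStrictOrderedRing K] [FloorRing K]

theorem ceil_natCast_pow_mul_div_pow {q : ℕ} (hq : q ≠ 0) (M : ℕ) {n i : ℕ} (hi : i ≤ n) :
    ⌈((q ^ n * M : ℕ) : K) / (q : K) ^ i⌉ = ((q ^ (n - i) * M : ℕ) : ℤ) := by
  have hq' : (q : K) ≠ 0 := Nat.cast_ne_zero.mpr hq
  rw [← pow_sub_mul_pow q hi, ← Int.ceil_natCast (R := K) (q ^ (n - i) * M)]
  congr 1
  push_cast
  field_simp

theorem ceil_natCast_pow_sub_one_div {q b : ℕ} (hq : 2 ≤ q) (hb : 1 ≤ b) :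
    ⌈((q ^ b - 1 : ℕ) : K) / q⌉ = ((q ^ (b - 1) : ℕ) : ℤ) := by
  have hq' : (1 : K) < q := by exact_mod_cast hq
  have hpow : (q : K) ^ b = q * q ^ (b - 1) := by rw [← pow_succ', Nat.sub_add_cancel hb]
  have hdiv : ((q ^ b - 1 : ℕ) : K) / q = ((q ^ (b - 1) : ℕ) : ℤ) - (q : K)⁻¹ := by
    rw [Nat.cast_sub (Nat.one_le_pow _ _ (by omega))]
    push_cast
    rw [hpow]
    field_simp
  rw [hdiv, Int.ceil_intCast_sub_of_nonneg_of_lt_one _ (by positivity) (inv_lt_one_of_one_lt₀ hq')]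

end Ceil

theorem Nat.sum_range_pow_sub_mul {q : ℕ} (hq : 2 ≤ q) (M n : ℕ) :
    ∑ i ∈ range (n + 1), q ^ (n - i) * M = M * (q ^ (n + 1) - 1) / (q - 1) := by
  calc ∑ i ∈ range (n + 1), q ^ (n - i) * M
      = ∑ i ∈ range (n + 1), q ^ i * M := sum_range_reflect (fun i ↦ q ^ i * M) (n + 1)
    _ = M * (q ^ (n + 1) - 1) / (q - 1) := by
      rw [← sum_mul, Nat.geomSum_eq hq, mul_comm,
        Nat.mul_div_assoc _ (Nat.sub_one_dvd_pow_sub_one q _)]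

/-- `Σ_{i=0}^{k} ⌈q^{b-1}·(q^k - q^{k-b})/q^i⌉ = (q^b - 1)·(q^k - 1)/(q - 1) + q^{b-1}`,
where the division on the right-hand side is exact. -/
theorem stmt14 (q k b : ℕ) (hq : 2 ≤ q) (hb : 1 ≤ b) (hkb : b ≤ k) :
    (∑ i ∈ Finset.range (k + 1),
        ⌈((q ^ (b - 1) * (q ^ k - q ^ (k - b)) : ℕ) : ℚ) / (q : ℚ) ^ i⌉)
      = (((q ^ b - 1) * (q ^ k - 1) / (q - 1) + q ^ (b - 1) : ℕ) : ℤ) := by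
  obtain ⟨n, rfl⟩ : ∃ n, k = n + 1 := ⟨k - 1, by omega⟩
  rw [Nat.pow_pred_mul_pow_sub_pow q hb hkb, Nat.add_sub_cancel, sum_range_succ]
  have hlast : ⌈((q ^ n * (q ^ b - 1) : ℕ) : ℚ) / (q : ℚ) ^ (n + 1)⌉ = ((q ^ (b - 1) : ℕ) : ℤ) := by
    rw [pow_succ, Nat.cast_mul, Nat.cast_pow, mul_div_mul_left _ _ (by positivity)]
    exact ceil_natCast_pow_sub_one_div hq hb
  rw [sum_congr rfl fun i hi ↦ ceil_natCast_pow_mul_div_pow (by omega) _ (mem_range_succ_iff.mp hi),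
    hlast, ← Nat.cast_sum, Nat.sum_range_pow_sub_mul hq, Nat.cast_add]
end

section
/- Let q be a prime power, let k ≥ b ≥ 1 be integers, and let γ be a primitive element of F_{q^k}. Then the extended code C̃ = { ((Tr_{q^k/q}(g·γ^i) + y)_{i=0}^{q^k - 2}, y) : g ∈ F_{q^k}, y ∈ F_q } is an F_q-linear subspace of F_q^{q^k} of dimension k + 1, and its minimum b-symbol distance equals q^k - q^{k-b}. -/
open Module

/-!
Write `n = q^k` and let `P : ZMod n → E` send `i < n - 1` to `γ^i` and `n - 1` to `0`; it is a
bijection, and the codeword of `(g, y)` is `i ↦ Tr(g P(i)) + y`. Its `b`-symbol weight is `n`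
minus the number of windows of `b` consecutive zero coordinates.

A window starting at `i` that avoids the last coordinate is zero iff `γ^i` lies in the affine
subspace `Tr(g γ^j x) = -y` (`j < b`) of `E`, whose direction has codimension `b` since the trace
form is nondegenerate and `1, γ, …, γ^(b-1)` are linearly independent. A window through the last
coordinate is zero iff `y = 0` and `Tr(g γ^(i+t)) = 0` for `t < b - 1`. Two such runs of `b - 1`
zeros overlap, so at most one of them fails to extend to a run of `b` zeros, and if one does, the
window starting at the last coordinate is not zero. Hence every nonzero codeword has at most
`q^(k-b)` zero windows, with equality when `Tr(g γ^t) = 0` for all `t < b - 1`.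
-/

section ZeroWindows

variable {n : ℕ} {F : Type*} [Zero F]

def zeroWindows (b : ℕ) (c : ZMod n → F) : Set (ZMod n) :=
  {i | ∀ j < b, c (i + (j : ZMod n)) = 0}

lemma mem_zeroWindows {b : ℕ} {c : ZMod n → F} {i : ZMod n} :
    i ∈ zeroWindows b c ↔ ∀ j < b, c (i + (j : ZMod n)) = 0 := Iff.rfl

lemma bWt_eq_sub_ncard_zeroWindows [NeZero n] (b : ℕ) (c : ZMod n → F) :
    bWt b c = n - (zeroWindows b c).ncard := by
  have hcompl : {i : ZMod n | ∃ j < b, c (i + (j : ZMod n)) ≠ 0} = (zeroWindows b c)ᶜ := by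
    ext i; simp [zeroWindows]
  have h := Set.ncard_add_ncard_compl (zeroWindows b c)
  rw [Nat.card_eq_fintype_card, ZMod.card] at h
  rw [bWt, Nat.card_coe_set_eq, hcompl]
  omega

end ZeroWindows

lemma linearIndependent_pow_of_le_finrank {F E : Type*} [Field F] [Field E] [Algebra F E]
    [FiniteDimensional F E] {γ : E} (hγ : ∀ x : E, x ≠ 0 → ∃ m : ℕ, γ ^ m = x)
    {d : ℕ} (hd : d ≤ finrank F E) : LinearIndependent F fun j : Fin d => γ ^ (j : ℕ) := by
  have htop : IntermediateField.adjoin F {γ} = ⊤ := by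
    refine eq_top_iff.2 fun x _ => ?_
    rcases eq_or_ne x 0 with rfl | hx
    · exact zero_mem _
    · obtain ⟨m, rfl⟩ := hγ x hx
      exact pow_mem (IntermediateField.mem_adjoin_simple_self F γ) m
  have hdeg : (minpoly F γ).natDegree = finrank F E := by
    rw [← IntermediateField.adjoin.finrank (Algebra.IsIntegral.isIntegral γ), htop,
      IntermediateField.finrank_top']
  exact (hdeg ▸ linearIndependent_pow (K := F) γ).comp (Fin.castLE hd) (Fin.castLE_injective hd)

section TraceAnnihilator

variable (F : Type*) {E : Type*} [Field F] [Field E] [Algebra F E]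

noncomputable def traceAnnihilator (g γ : E) (d : ℕ) : Submodule F E :=
  (Algebra.traceForm F E).orthogonal
    (Submodule.span F (Set.range fun j : Fin d => g * γ ^ (j : ℕ)))

variable {F}

lemma mem_traceAnnihilator {g γ x : E} {d : ℕ} :
    x ∈ traceAnnihilator F g γ d ↔ ∀ j < d, Algebra.trace F E (g * γ ^ j * x) = 0 := by
  rw [traceAnnihilator, LinearMap.BilinForm.mem_orthogonal_iff]
  refine ⟨fun h j hj => h _ (Submodule.subset_span ⟨⟨j, hj⟩, rfl⟩), fun h v hv => ?_⟩
  induction hv using Submodule.span_induction with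
  | mem v hv => obtain ⟨j, rfl⟩ := hv; exact h j j.isLt
  | zero => simp
  | add u v _ _ hu hv => simp [hu, hv]
  | smul a v _ hv => simp [hv]

lemma traceAnnihilator_succ_le (g γ : E) (d : ℕ) :
    traceAnnihilator F g γ (d + 1) ≤ traceAnnihilator F g γ d :=
  fun _ hx => mem_traceAnnihilator.2 fun j hj => mem_traceAnnihilator.1 hx j (by omega)

/-- Two overlapping runs of `d` consecutive zeros of `m ↦ Tr(g γ^m)`, starting at `u < u'`,
merge into a run of `d + 1` zeros starting at `u`. -/
lemma pow_mem_traceAnnihilator_succ {g γ : E} {d u u' : ℕ} (hu : u < u') (hu' : u' ≤ u + d)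
    (h : γ ^ u ∈ traceAnnihilator F g γ d) (h' : γ ^ u' ∈ traceAnnihilator F g γ d) :
    γ ^ u ∈ traceAnnihilator F g γ (d + 1) := by
  rw [mem_traceAnnihilator] at *
  intro j hj
  rcases Nat.lt_succ_iff_lt_or_eq.1 hj with hj | rfl
  · exact h j hj
  · have := h' (u + j - u') (by omega)
    rwa [mul_assoc, ← pow_add, Nat.sub_add_cancel (by omega), add_comm, pow_add, ← mul_assoc]
      at this

variable [Fintype F] [Fintype E]

lemma finrank_traceAnnihilator {g γ : E} {d : ℕ} (hg : g ≠ 0)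
    (hγ : LinearIndependent F fun j : Fin d => γ ^ (j : ℕ)) :
    finrank F (traceAnnihilator F g γ d) = finrank F E - d := by
  have hli : LinearIndependent F fun j : Fin d => g * γ ^ (j : ℕ) :=
    hγ.map' (LinearMap.mulLeft F g) (LinearMap.ker_eq_bot.2 (mul_right_injective₀ hg))
  rw [traceAnnihilator, LinearMap.BilinForm.finrank_orthogonal (traceForm_nondegenerate F E),
    finrank_span_eq_card hli, Fintype.card_fin]

lemma card_traceAnnihilator {g γ : E} {d : ℕ} (hg : g ≠ 0)
    (hγ : LinearIndependent F fun j : Fin d => γ ^ (j : ℕ)) :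
    Nat.card (traceAnnihilator F g γ d) = Fintype.card F ^ (finrank F E - d) := by
  classical
  rw [Nat.card_eq_fintype_card, card_eq_pow_finrank (K := F), finrank_traceAnnihilator hg hγ]

lemma exists_ne_zero_one_mem_traceAnnihilator {γ : E} {d : ℕ} (hd : d < finrank F E)
    (hγ : LinearIndependent F fun j : Fin d => γ ^ (j : ℕ)) :
    ∃ g ≠ 0, (1 : E) ∈ traceAnnihilator F g γ d := by
  have hne : traceAnnihilator F 1 γ d ≠ ⊥ := fun h => by
    have := finrank_traceAnnihilator one_ne_zero hγ
    rw [h, finrank_bot] at this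
    omega
  obtain ⟨g, hg, hg0⟩ := Submodule.exists_mem_ne_zero_of_ne_bot hne
  refine ⟨g, hg0, mem_traceAnnihilator.2 fun j hj => ?_⟩
  simpa [mul_comm] using mem_traceAnnihilator.1 hg j hj

lemma ncard_setOf_forall_trace_add_eq_zero_le {g γ : E} {d : ℕ} {y : F} (hy : y ≠ 0)
    (hγ : LinearIndependent F fun j : Fin (d + 1) => γ ^ (j : ℕ)) :
    {x : E | ∀ j < d + 1, Algebra.trace F E (g * γ ^ j * x) + y = 0}.ncard ≤
      Fintype.card F ^ (finrank F E - (d + 1)) := by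
  set S := {x : E | ∀ j < d + 1, Algebra.trace F E (g * γ ^ j * x) + y = 0}
  rcases eq_or_ne g 0 with rfl | hg
  · have : S = ∅ :=
      Set.eq_empty_of_forall_notMem fun x hx => hy (by simpa using hx 0 d.succ_pos)
    simp [this]
  rcases S.eq_empty_or_nonempty with hS | ⟨x₀, hx₀⟩
  · simp [hS]
  rw [← card_traceAnnihilator hg hγ, ← Nat.card_coe_set_eq]
  refine Set.ncard_le_ncard_of_injOn (· - x₀) (fun x hx => ?_) sub_left_injective.injOn
    (Set.toFinite _)
  refine mem_traceAnnihilator.2 fun j hj => ?_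
  rw [mul_sub, map_sub]
  linear_combination hx j hj - hx₀ j hj

end TraceAnnihilator

section TraceCode

variable {F E : Type*} [Field F] [Field E] [Algebra F E]

variable (F) in
noncomputable def traceCodeMap {ι : Type*} (P : ι → E) : (E × F) →ₗ[F] (ι → F) where
  toFun p i := Algebra.trace F E (p.1 * P i) + p.2
  map_add' p p' := by
    ext i
    simp only [Prod.fst_add, Prod.snd_add, add_mul, map_add, Pi.add_apply]
    ring
  map_smul' a p := by ext i; simp [mul_add]

lemma traceCodeMap_apply {ι : Type*} (P : ι → E) (g : E) (y : F) (i : ι) :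
    traceCodeMap F P (g, y) i = Algebra.trace F E (g * P i) + y := rfl

lemma traceCodeMap_injective [Fintype F] [Fintype E] {ι : Type*} {P : ι → E}
    (hP : Function.Surjective P) : Function.Injective (traceCodeMap F P) := by
  refine (injective_iff_map_eq_zero _).2 fun ⟨g, y⟩ h => ?_
  have hval : ∀ i, Algebra.trace F E (g * P i) + y = 0 := fun i => congrFun h i
  obtain ⟨i₀, hi₀⟩ := hP 0
  have hy : y = 0 := by simpa [hi₀] using hval i₀
  have hg : g = 0 := (traceForm_nondegenerate F E).1 g fun x => by
    obtain ⟨i, rfl⟩ := hP x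
    simpa [hy] using hval i
  simp [hg, hy]

end TraceCode

section PointOf

variable {E : Type*} [Field E] {n : ℕ} {γ : E}

noncomputable def pointOf (γ : E) (i : ZMod n) : E :=
  if i.val < n - 1 then γ ^ i.val else 0

lemma pointOf_of_lt {i : ZMod n} (h : i.val < n - 1) : pointOf γ i = γ ^ i.val := if_pos h

lemma pointOf_of_le {i : ZMod n} (h : n - 1 ≤ i.val) : pointOf γ i = 0 := if_neg (by omega)

lemma pointOf_bijective [Fintype E] (hn : Fintype.card E = n) (hγ1 : γ ^ (n - 1) = 1)
    (hγ : ∀ x : E, x ≠ 0 → ∃ m : ℕ, γ ^ m = x) :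
    Function.Bijective (pointOf (n := n) γ) := by
  have : NeZero n := ⟨by rw [← hn]; exact Fintype.card_ne_zero⟩
  have hn1 : 1 < n := hn ▸ Fintype.one_lt_card
  refine (Fintype.bijective_iff_surjective_and_card _).2 ⟨fun x => ?_, by rw [ZMod.card, hn]⟩
  rcases eq_or_ne x 0 with rfl | hx
  · exact ⟨((n - 1 : ℕ) : ZMod n), pointOf_of_le (ZMod.val_natCast_of_lt (by omega)).ge⟩
  obtain ⟨m, rfl⟩ := hγ x hx
  have hm : m % (n - 1) < n - 1 := Nat.mod_lt _ (by omega)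
  have hval : ((m % (n - 1) : ℕ) : ZMod n).val = m % (n - 1) :=
    ZMod.val_natCast_of_lt (by omega)
  refine ⟨((m % (n - 1) : ℕ) : ZMod n), ?_⟩
  rw [pointOf_of_lt (by rwa [hval]), hval, ← pow_eq_pow_mod m hγ1]

lemma pointOf_natCast_add_of_lt {i : ZMod n} {j : ℕ} (h : i.val + j < n - 1) :
    pointOf γ (i + (j : ZMod n)) = γ ^ j * γ ^ i.val := by
  have hval : (i + (j : ZMod n)).val = i.val + j := by
    rw [ZMod.val_add_of_lt] <;> rw [ZMod.val_natCast_of_lt (by omega)]; omega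
  rw [pointOf_of_lt (hval ▸ h), hval, pow_add, mul_comm]

lemma pointOf_natCast_add_eq_zero [NeZero n] {i : ZMod n} {j : ℕ} (h : i.val + j = n - 1) :
    pointOf γ (i + (j : ZMod n)) = 0 := by
  have hval : (i + (j : ZMod n)).val = n - 1 := by
    have := NeZero.pos n
    rw [ZMod.val_add_of_lt] <;> rw [ZMod.val_natCast_of_lt (by omega)] <;> omega
  exact pointOf_of_le hval.ge

lemma pointOf_natCast_add_of_le [NeZero n] (hγ1 : γ ^ (n - 1) = 1) {i : ZMod n} {j : ℕ}
    (hj : j < n) (h : n ≤ i.val + j) :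
    pointOf γ (i + (j : ZMod n)) = γ ^ (j - 1) * γ ^ i.val := by
  have hi := i.val_lt
  have hval : (i + (j : ZMod n)).val = i.val + j - n := by
    rw [ZMod.val_add, ZMod.val_natCast_of_lt hj, Nat.mod_eq_sub_mod h, Nat.mod_eq_of_lt (by omega)]
  rw [pointOf_of_lt (by omega), hval, ← pow_add,
    show j - 1 + i.val = i.val + j - n + (n - 1) by omega, pow_add, hγ1, mul_one]

lemma val_eq_of_pointOf_eq_zero [NeZero n] (hP : Function.Injective (pointOf (n := n) γ))
    {i : ZMod n} (h : pointOf γ i = 0) : i.val = n - 1 := by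
  have hlast : ((n - 1 : ℕ) : ZMod n).val = n - 1 :=
    ZMod.val_natCast_of_lt (by have := NeZero.pos n; omega)
  rw [hP (h.trans (pointOf_of_le hlast.ge).symm), hlast]

/-- A generator `γ` of `Eˣ` satisfies `γ ^ (n - 1) = 1`, except when `γ = 0`; that forces
`E = 𝔽₂`, where `1` is a generator defining the same points. -/
lemma exists_pow_eq_one_pointOf_eq [Fintype E] (hn : Fintype.card E = n)
    (hγ : ∀ x : E, x ≠ 0 → ∃ m : ℕ, γ ^ m = x) :
    ∃ γ' : E, γ' ^ (n - 1) = 1 ∧ (∀ x : E, x ≠ 0 → ∃ m : ℕ, γ' ^ m = x) ∧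
      pointOf (n := n) γ' = pointOf γ := by
  rcases ne_or_eq γ 0 with hγ0 | rfl
  · exact ⟨γ, hn ▸ FiniteField.pow_card_sub_one_eq_one γ hγ0, hγ, rfl⟩
  have h01 : ∀ x : E, x ≠ 0 → x = 1 := fun x hx => by
    obtain ⟨m, rfl⟩ := hγ x hx
    rcases m with _ | m
    · exact pow_zero _
    · exact absurd (zero_pow m.succ_ne_zero) hx
  have hn2 : n = 2 := by
    classical
    refine le_antisymm ?_ (hn ▸ Fintype.one_lt_card)
    rw [← hn, ← Finset.card_univ]
    refine (Finset.card_le_card fun x _ => ?_).trans (Finset.card_le_two (a := (0 : E)) (b := 1))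
    by_cases hx : x = 0 <;> simp [hx, h01]
  refine ⟨1, one_pow _, fun x hx => ⟨0, (h01 x hx).symm ▸ pow_zero 1⟩, funext fun i => ?_⟩
  unfold pointOf
  split_ifs with hi
  · rw [show i.val = 0 by omega, pow_zero, pow_zero]
  · rfl

end PointOf

section Windows

variable {F E : Type*} [Field F] [Field E] [Algebra F E] {n : ℕ} {γ g : E} {y : F}

lemma range_traceCodeMap_pointOf :
    (LinearMap.range (traceCodeMap F (pointOf (n := n) γ)) : Set (ZMod n → F)) =
      {c | ∃ (g : E) (y : F), c = fun i : ZMod n =>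
        if i.val < n - 1 then Algebra.trace F E (g * γ ^ i.val) + y else y} := by
  ext c
  simp only [SetLike.mem_coe, LinearMap.mem_range, Prod.exists, Set.mem_ofPred_eq]
  refine exists₂_congr fun g y => ⟨fun h => ?_, fun h => ?_⟩ <;> subst h <;> ext i <;>
    by_cases hi : i.val < n - 1 <;> simp [traceCodeMap_apply, pointOf, hi]

lemma mem_zeroWindows_of_lt {b : ℕ} {i : ZMod n} (h : i.val + b < n) :
    i ∈ zeroWindows b (traceCodeMap F (pointOf γ) (g, y)) ↔
      ∀ j < b, Algebra.trace F E (g * γ ^ j * γ ^ i.val) + y = 0 := by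
  refine forall₂_congr fun j hj => ?_
  rw [traceCodeMap_apply, pointOf_natCast_add_of_lt (by omega), mul_assoc]

lemma mem_zeroWindows_of_le [NeZero n] (hγ1 : γ ^ (n - 1) = 1) {d : ℕ} (hd : d + 1 < n)
    {i : ZMod n} (h : n ≤ i.val + (d + 1)) :
    i ∈ zeroWindows (d + 1) (traceCodeMap F (pointOf γ) (g, y)) ↔
      y = 0 ∧ γ ^ i.val ∈ traceAnnihilator F g γ d := by
  have hi := i.val_lt
  set c := traceCodeMap F (pointOf γ) (g, y) with hc
  have hlt : ∀ j, i.val + j < n - 1 →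
      c (i + j) = Algebra.trace F E (g * γ ^ j * γ ^ i.val) + y :=
    fun j hj => by rw [hc, traceCodeMap_apply, pointOf_natCast_add_of_lt hj, mul_assoc]
  have hge : ∀ j < n, n ≤ i.val + j →
      c (i + j) = Algebra.trace F E (g * γ ^ (j - 1) * γ ^ i.val) + y :=
    fun j hj hij => by
      rw [hc, traceCodeMap_apply, pointOf_natCast_add_of_le hγ1 hj hij, mul_assoc]
  have hlast : c (i + (n - 1 - i.val : ℕ)) = y := by
    rw [hc, traceCodeMap_apply, pointOf_natCast_add_eq_zero (by omega), mul_zero, map_zero,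
      zero_add]
  rw [mem_zeroWindows, mem_traceAnnihilator]
  constructor
  · intro hz
    have hy : y = 0 := hlast ▸ hz _ (by omega)
    refine ⟨hy, fun t ht => ?_⟩
    rcases lt_or_ge (i.val + t) (n - 1) with ht' | ht'
    · simpa [hlt t ht', hy] using hz t (by omega)
    · have := hz (t + 1) (by omega)
      rwa [hge (t + 1) (by omega) (by omega), hy, add_zero, Nat.add_sub_cancel] at this
  · rintro ⟨rfl, hV⟩ j hj
    rcases lt_trichotomy (i.val + j) (n - 1) with hj' | hj' | hj'
    · simpa [hlt j hj'] using hV j (by omega)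
    · rw [show j = n - 1 - i.val by omega, hlast]
    · simpa [hge j (by omega) (by omega)] using hV (j - 1) (by omega)

lemma zeroWindows_zero_eq_preimage [NeZero n] (hγ1 : γ ^ (n - 1) = 1) {d : ℕ}
    (hd : d + 1 < n) (h1 : (1 : E) ∈ traceAnnihilator F g γ d) :
    zeroWindows (d + 1) (traceCodeMap F (pointOf (n := n) γ) (g, 0)) =
      pointOf γ ⁻¹' traceAnnihilator F g γ (d + 1) := by
  ext i
  have hi := i.val_lt
  rw [Set.mem_preimage, SetLike.mem_coe]
  by_cases hA : i.val + (d + 1) < n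
  · rw [mem_zeroWindows_of_lt hA, pointOf_of_lt (by omega), mem_traceAnnihilator]
    simp only [add_zero]
  rw [mem_zeroWindows_of_le hγ1 hd (by omega), and_iff_right rfl]
  by_cases hlast : i.val = n - 1
  · rw [pointOf_of_le hlast.ge, hlast, hγ1]
    exact iff_of_true h1 (zero_mem _)
  · rw [pointOf_of_lt (by omega)]
    refine ⟨fun h => ?_, fun h => traceAnnihilator_succ_le _ _ _ h⟩
    exact pow_mem_traceAnnihilator_succ (u' := n - 1) (by omega) (by omega) h (hγ1 ▸ h1)

end Windows

section Counting

variable {F E : Type*} [Field F] [Field E] [Fintype E] [Algebra F E] {n : ℕ} [NeZero n] {γ : E}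
  {d : ℕ}

lemma ncard_zeroWindows_le_of_ne_zero [Fintype F] (hγ1 : γ ^ (n - 1) = 1)
    (hP : Function.Injective (pointOf (n := n) γ))
    (hγ : LinearIndependent F fun j : Fin (d + 1) => γ ^ (j : ℕ)) (hd : d + 1 < n)
    {g : E} {y : F} (hy : y ≠ 0) :
    (zeroWindows (d + 1) (traceCodeMap F (pointOf (n := n) γ) (g, y))).ncard ≤
      Fintype.card F ^ (finrank F E - (d + 1)) := by
  refine (Set.ncard_le_ncard_of_injOn _ (fun i hi => ?_) hP.injOn (Set.toFinite _)).trans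
    (ncard_setOf_forall_trace_add_eq_zero_le (g := g) hy hγ)
  by_cases hA : i.val + (d + 1) < n
  · rw [Set.mem_ofPred_eq, pointOf_of_lt (by omega)]
    exact (mem_zeroWindows_of_lt hA).1 hi
  · exact absurd ((mem_zeroWindows_of_le hγ1 hd (by omega)).1 hi).1 hy

lemma ncard_zeroWindows_zero_le (hγ1 : γ ^ (n - 1) = 1)
    (hP : Function.Injective (pointOf (n := n) γ)) (hd : d + 1 < n) (g : E) :
    (zeroWindows (d + 1) (traceCodeMap F (pointOf (n := n) γ) (g, 0))).ncard ≤
      Nat.card (traceAnnihilator F g γ (d + 1)) := by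
  classical
  set Z := zeroWindows (d + 1) (traceCodeMap F (pointOf (n := n) γ) (g, 0))
  set V := traceAnnihilator F g γ (d + 1)
  have hnotMem : ∀ i ∈ Z, pointOf γ i ∉ V → i.val < n - 1 ∧ n ≤ i.val + (d + 1) := by
    intro i hi hV
    refine ⟨by_contra fun hlast => hV ?_, by_contra fun hA => hV ?_⟩
    · rw [pointOf_of_le (by omega)]
      exact V.zero_mem
    rw [pointOf_of_lt (by omega), mem_traceAnnihilator]
    simpa using (mem_zeroWindows_of_lt (i := i) (by omega)).1 hi
  have hmerge : ∀ i ∈ Z, ∀ i' ∈ Z, i.val < i'.val → pointOf γ i ∉ V → False := by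
    intro i hi i' hi' hlt hV
    have hi'n := i'.val_lt
    obtain ⟨hin, hiB⟩ := hnotMem i hi hV
    have hB := (mem_zeroWindows_of_le hγ1 hd hiB).1 hi
    have hB' := (mem_zeroWindows_of_le hγ1 hd (by omega)).1 hi'
    rw [pointOf_of_lt hin] at hV
    exact hV (pow_mem_traceAnnihilator_succ hlt (by omega) hB.2 hB'.2)
  -- By `hmerge`, a zero window whose start point lies outside `V` is the last zero window and
  -- starts before `n - 1`; then the window at `n - 1`, with start point `0`, is not zero, so such
  -- a window may be sent to `0`.
  rw [← Nat.card_coe_set_eq]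
  refine Set.ncard_le_ncard_of_injOn (fun i => if pointOf γ i ∈ V then pointOf γ i else 0)
    (fun i _ => ?_) (fun i hi i' hi' heq => ?_) (Set.toFinite _)
  · split_ifs with h
    exacts [h, V.zero_mem]
  by_cases h : pointOf γ i ∈ V <;> by_cases h' : pointOf γ i' ∈ V <;>
    simp only [h, h', if_true, if_false] at heq
  · exact hP heq
  · refine (hmerge i' hi' i hi ?_ h').elim
    rw [val_eq_of_pointOf_eq_zero hP heq]
    exact (hnotMem i' hi' h').1
  · refine (hmerge i hi i' hi' ?_ h).elim
    rw [val_eq_of_pointOf_eq_zero hP heq.symm]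
    exact (hnotMem i hi h).1
  · rcases lt_trichotomy i.val i'.val with hlt | hval | hlt
    · exact (hmerge i hi i' hi' hlt h).elim
    · exact ZMod.val_injective n hval
    · exact (hmerge i' hi' i hi hlt h').elim

lemma ncard_zeroWindows_le [Fintype F] (hγ1 : γ ^ (n - 1) = 1)
    (hP : Function.Injective (pointOf (n := n) γ))
    (hγ : LinearIndependent F fun j : Fin (d + 1) => γ ^ (j : ℕ)) (hd : d + 1 < n)
    {g : E} {y : F} (hgy : (g, y) ≠ 0) :
    (zeroWindows (d + 1) (traceCodeMap F (pointOf (n := n) γ) (g, y))).ncard ≤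
      Fintype.card F ^ (finrank F E - (d + 1)) := by
  rcases eq_or_ne y 0 with rfl | hy
  · have hg : g ≠ 0 := by rintro rfl; exact hgy rfl
    exact (ncard_zeroWindows_zero_le hγ1 hP hd g).trans (card_traceAnnihilator hg hγ).le
  · exact ncard_zeroWindows_le_of_ne_zero hγ1 hP hγ hd hy

end Counting

/-- The extended code `C̃ = { ((Tr(g·γ^i) + y)_{i=0}^{q^k-2}, y) : g ∈ F_{q^k}, y ∈ F_q }`
is an `F_q`-linear subspace of `F_q^{q^k}` of dimension `k+1` whose minimum `b`-symbol
distance equals `q^k - q^{k-b}`. -/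
theorem stmt15 (q k b : ℕ) (hb : 1 ≤ b) (hkb : b ≤ k)
    (F E : Type*) [Field F] [Fintype F] [Field E] [Fintype E] [Algebra F E]
    (hF : Fintype.card F = q) (hE : Fintype.card E = q ^ k)
    (γ : E) (hγ : ∀ x : E, x ≠ 0 → ∃ m : ℕ, γ ^ m = x) :
    ∃ C : Submodule F (ZMod (q ^ k) → F),
      (C : Set (ZMod (q ^ k) → F)) =
        {c | ∃ (g : E) (y : F),
          c = fun i : ZMod (q ^ k) =>
            if i.val < q ^ k - 1 then Algebra.trace F E (g * γ ^ i.val) + y else y} ∧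
      Module.finrank F C = k + 1 ∧
      IsLeast {w | ∃ c ∈ C, c ≠ 0 ∧ bWt b c = w} (q ^ k - q ^ (k - b)) := by
  obtain ⟨d, rfl⟩ : ∃ d, b = d + 1 := ⟨b - 1, by omega⟩
  have hq : 1 < q := hF ▸ Fintype.one_lt_card
  have hk : finrank F E = k := by
    have h := card_eq_pow_finrank (K := F) (V := E)
    rw [hF, hE] at h
    exact Nat.pow_right_injective hq h.symm
  have hd : d + 1 < q ^ k := hkb.trans_lt (Nat.lt_pow_self hq)
  have : NeZero (q ^ k) := ⟨by positivity⟩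
  obtain ⟨γ', hγ'1, hγ', hP⟩ := exists_pow_eq_one_pointOf_eq hE hγ
  have hPbij := pointOf_bijective hE hγ'1 hγ'
  have hli : ∀ {e}, e ≤ k → LinearIndependent F fun j : Fin e => γ' ^ (j : ℕ) :=
    fun he => linearIndependent_pow_of_le_finrank hγ' (hk ▸ he)
  have hinj := traceCodeMap_injective (F := F) hPbij.2
  refine ⟨LinearMap.range (traceCodeMap F (pointOf γ')), by rw [hP, range_traceCodeMap_pointOf],
    by rw [LinearMap.finrank_range_of_inj hinj, finrank_prod, hk, finrank_self], ?_, ?_⟩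
  · obtain ⟨g, hg, h1⟩ := exists_ne_zero_one_mem_traceAnnihilator (hk ▸ hkb) (hli (by omega))
    refine ⟨_, ⟨(g, 0), rfl⟩, fun h => hg ?_, ?_⟩
    · simpa using hinj (h.trans (map_zero _).symm)
    rw [bWt_eq_sub_ncard_zeroWindows, zeroWindows_zero_eq_preimage hγ'1 hd h1,
      Set.ncard_preimage_of_injective_subset_range hPbij.1 (by simp [hPbij.2.range_eq]),
      ← Nat.card_coe_set_eq, SetLike.coe_sort_coe, card_traceAnnihilator hg (hli hkb), hF, hk]
  · rintro _ ⟨_, ⟨⟨g, y⟩, rfl⟩, hc, rfl⟩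
    rw [bWt_eq_sub_ncard_zeroWindows]
    refine Nat.sub_le_sub_left ?_ _
    simpa [hF, hk] using
      ncard_zeroWindows_le hγ'1 hPbij.1 (hli hkb) hd fun h => hc (by rw [h, map_zero])
end

section
/- Let q ≥ 2 and k ≥ b ≥ 1 be integers. Then Σ_{i=0}^{k} ⌈q^{b-1}·(q^k - q^{k-b} + 1)/q^i⌉ = (q^b - 1)·q^k/(q - 1) + q^{b-1} + k - b. -/
/-!
Write `b = a + 1`, `k = a + 1 + c` and `d = q ^ a * (q ^ k - q ^ c + 1)`. For `i ≤ a` the power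
`q ^ i` divides `d`; for `a < i < k` one has `d = (q ^ (k + a - i) - q ^ (k - 1 - i)) * q ^ i + q ^ a`
with `0 < q ^ a ≤ q ^ i`, so the quotient is rounded up by one; and `⌈d / q ^ k⌉ = q ^ a`.
Summing the resulting geometric series, everything reduces to the identity
`(∑_{i ≤ a} q ^ i) * (q ^ c - 1) = (q ^ (a + 1) - 1) * ∑_{j < c} q ^ j`,
both sides being `(q ^ (a + 1) - 1) * (q ^ c - 1) / (q - 1)`.
-/

open Finset

theorem Int.ceil_intCast_div_eq_of_lt_of_le {K : Type*} [Field K] [LinearOrder K]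
    [IsStrictOrderedRing K] [FloorRing K] {n m v : ℤ} (hm : 0 < m)
    (h₁ : (v - 1) * m < n) (h₂ : n ≤ v * m) : ⌈(n : K) / m⌉ = v := by
  have hm' : (0 : K) < m := by exact_mod_cast hm
  rw [Int.ceil_eq_iff, lt_div_iff₀ hm', div_le_iff₀ hm']
  constructor <;> exact_mod_cast ‹_›

namespace Griesmer

variable {q : ℤ} (a c : ℕ)

/-- `q ^ (b - 1) * (q ^ k - q ^ (k - b) + 1)` with `b = a + 1` and `k = a + 1 + c`. -/
abbrev d (q : ℤ) (a c : ℕ) : ℤ := q ^ a * (q ^ (a + 1 + c) - q ^ c + 1)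

theorem ceil_d_div_pow_of_le (hq : 0 < q) {e i : ℕ} (h : e + i = a) :
    ⌈(d q a c : ℚ) / (q : ℚ) ^ e⌉ = q ^ i * (q ^ (a + 1 + c) - q ^ c + 1) := by
  have hd : d q a c = q ^ i * (q ^ (a + 1 + c) - q ^ c + 1) * q ^ e := by
    rw [← h]; ring
  rw [← Int.cast_pow, hd]
  apply Int.ceil_intCast_div_eq_of_lt_of_le (by positivity) <;> nlinarith [pow_pos hq e]

theorem ceil_d_div_pow_of_lt (hq : 0 < q) {e j : ℕ} (h : e + 1 + j = c) :
    ⌈(d q a c : ℚ) / (q : ℚ) ^ (a + 1 + e)⌉ = q ^ (a + 1 + j) - q ^ j + 1 := by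
  have hd : d q a c = (q ^ (a + 1 + j) - q ^ j) * q ^ (a + 1 + e) + q ^ a := by
    rw [← h]; ring
  have hle : q ^ a ≤ q ^ (a + 1 + e) := pow_le_pow_right₀ hq (by omega)
  rw [← Int.cast_pow, hd]
  apply Int.ceil_intCast_div_eq_of_lt_of_le (by positivity) <;> nlinarith [pow_pos hq a]

theorem ceil_d_div_pow_last (hq : 0 < q) :
    ⌈(d q a c : ℚ) / (q : ℚ) ^ (a + 1 + c)⌉ = q ^ a := by
  have hd : d q a c = (q ^ a - 1) * q ^ (a + 1 + c) + (q ^ (a + 1 + c) - q ^ (a + c) + q ^ a) := by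
    ring
  have h₁ : q ^ (a + c) ≤ q ^ (a + 1 + c) := pow_le_pow_right₀ hq (by omega)
  have h₂ : q ^ a ≤ q ^ (a + c) := pow_le_pow_right₀ hq (by omega)
  rw [← Int.cast_pow, hd]
  apply Int.ceil_intCast_div_eq_of_lt_of_le (by positivity) <;> nlinarith [pow_pos hq a]

theorem sum_ceil_d_div_pow (hq : 0 < q) :
    ∑ i ∈ range (a + 1 + c + 1), ⌈(d q a c : ℚ) / (q : ℚ) ^ i⌉
      = (∑ i ∈ range (a + 1), q ^ i) * q ^ (a + 1 + c) + q ^ a + c := by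
  -- after reversing the summation order the three kinds of terms occupy consecutive ranges
  rw [← sum_range_reflect, show a + 1 + c + 1 = c + 1 + (a + 1) by omega, sum_range_add,
    sum_range_succ']
  have hlow : ∀ i ∈ range (a + 1), ⌈(d q a c : ℚ) / (q : ℚ) ^ (c + 1 + (a + 1) - 1 - (c + 1 + i))⌉
      = q ^ i * (q ^ (a + 1 + c) - q ^ c + 1) := fun i hi =>
    ceil_d_div_pow_of_le a c hq (by simp at hi; omega)
  have hmid : ∀ j ∈ range c, ⌈(d q a c : ℚ) / (q : ℚ) ^ (c + 1 + (a + 1) - 1 - (j + 1))⌉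
      = q ^ (a + 1 + j) - q ^ j + 1 := fun j hj => by
    simp only [mem_range] at hj
    rw [show c + 1 + (a + 1) - 1 - (j + 1) = a + 1 + (c - 1 - j) by omega]
    exact ceil_d_div_pow_of_lt a c hq (by omega)
  rw [sum_congr rfl hlow, sum_congr rfl hmid, show c + 1 + (a + 1) - 1 - 0 = a + 1 + c by omega,
    ceil_d_div_pow_last a c hq]
  have hGa := geom_sum_mul q (a + 1)
  have hGc := geom_sum_mul q c
  simp only [sum_add_distrib, sum_sub_distrib, ← sum_mul, pow_add, ← mul_sum, sum_const, card_range]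
  linear_combination (∑ i ∈ range (a + 1), q ^ i) * hGc - (∑ i ∈ range c, q ^ i) * hGa

end Griesmer

/-- `Σ_{i=0}^{k} ⌈q^{b-1}·(q^k - q^{k-b} + 1)/q^i⌉ = (q^b - 1)·q^k/(q - 1) + q^{b-1} + k - b`,
where the division on the right-hand side is exact. -/
theorem stmt17 (q k b : ℕ) (hq : 2 ≤ q) (hb : 1 ≤ b) (hkb : b ≤ k) :
    (∑ i ∈ Finset.range (k + 1),
        ⌈((q ^ (b - 1) * (q ^ k - q ^ (k - b) + 1) : ℕ) : ℚ) / (q : ℚ) ^ i⌉)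
      = (((q ^ b - 1) * q ^ k / (q - 1) + q ^ (b - 1) + (k - b) : ℕ) : ℤ) := by
  obtain ⟨a, rfl⟩ : ∃ a, b = a + 1 := ⟨b - 1, by omega⟩
  obtain ⟨c, rfl⟩ : ∃ c, k = a + 1 + c := ⟨k - (a + 1), by omega⟩
  have hle : q ^ c ≤ q ^ (a + 1 + c) := Nat.pow_le_pow_right (by omega) (by omega)
  have hd : ((q ^ a * (q ^ (a + 1 + c) - q ^ c + 1) : ℕ) : ℚ) = (Griesmer.d q a c : ℚ) := by
    push_cast [Nat.cast_sub hle]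
    rfl
  rw [Nat.mul_div_right_comm (Nat.sub_one_dvd_pow_sub_one q (a + 1)), ← Nat.geomSum_eq hq,
    Nat.add_sub_cancel, Nat.add_sub_cancel_left, hd]
  exact_mod_cast Griesmer.sum_ceil_d_div_pow (q := q) a c (by omega)
end
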